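/- arXiv:2012.03828 — 3 statements merged into one kernel-verified Lean document; each statement's English description precedes it below -/
import Mathlib

section
/- Let λ/μ be a skew shape with n boxes, and for 1 ≤ i ≤ n−1 let σ_i be the ℂ-linear operator on the ℂ-vector space with basis {v_T : T ∈ SYT(λ/μ)} defined by σ_i v_T = a_i(T) v_T + (1 + a_i(T)) v_{s_i(T)}, where v_{s_i(T)} := 0 if s_i(T) is not standard. Then the operators σ_1, …, σ_{n−1} satisfy the defining relations of the symmetric group S_n: σ_i σ_j = σ_j σ_i for |i − j| > 1, σ_i σ_{i+1} σ_i = σ_{i+1} σ_i σ_{i+1} for 1 ≤ i ≤ n−2, and σ_i² = id for 1 ≤ i ≤ n−1; consequently s_i ↦ σ_i extends to a ℂ-linear representation of S_n (Young's seminormal representation). -/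
open scoped Classical

noncomputable section

/-- A skew shape `λ/μ`: a pair of Young diagrams with `μ ⊆ λ`. -/
structure SkewShape where
  lam : YoungDiagram
  mu : YoungDiagram
  sub : mu ≤ lam

namespace SkewShape

/-- The boxes of the skew shape: boxes of `λ` not in `μ`. -/
def cells (sh : SkewShape) : Finset (ℕ × ℕ) := sh.lam.cells \ sh.mu.cells

/-- The number `n` of boxes of the skew shape. -/
def nb (sh : SkewShape) : ℕ := sh.cells.card

/-- `f` is a filling of the skew shape with `1, …, n`, each appearing exactly once
(normalized to be `0` off the shape). -/
def IsFilling (sh : SkewShape) (f : ℕ × ℕ → ℕ) : Prop :=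
  Set.BijOn f (↑sh.cells) (↑(Finset.Icc 1 sh.nb)) ∧ ∀ b, b ∉ sh.cells → f b = 0

/-- Entries increase from left to right along rows and from top to bottom down columns. -/
def IsRowColStrict (sh : SkewShape) (f : ℕ × ℕ → ℕ) : Prop :=
  (∀ x y : ℕ, (x, y) ∈ sh.cells → (x, y + 1) ∈ sh.cells → f (x, y) < f (x, y + 1)) ∧
  (∀ x y : ℕ, (x, y) ∈ sh.cells → (x + 1, y) ∈ sh.cells → f (x, y) < f (x + 1, y))

/-- The set of standard Young tableaux of shape `λ/μ`. -/
def SYT (sh : SkewShape) : Set ((ℕ × ℕ) → ℕ) := {f | sh.IsFilling f ∧ sh.IsRowColStrict f}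

/-- Standard Young tableaux of shape `λ/μ`, as a type. -/
def SYTt (sh : SkewShape) : Type := {f : (ℕ × ℕ) → ℕ // f ∈ sh.SYT}

/-- The box of the tableau `f` containing the entry `i`. -/
def boxOf (sh : SkewShape) (f : (ℕ × ℕ) → ℕ) (i : ℕ) : ℕ × ℕ :=
  Function.invFunOn f (↑sh.cells) i

end SkewShape

/-- The content `ct(b) = y - x` of a box `b = (x, y)` (row `x`, column `y`). -/
def ctZ (b : ℕ × ℕ) : ℤ := (b.2 : ℤ) - (b.1 : ℤ)

/-- Exchange the entries `i` and `i+1` in a filling. -/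
def sApply (i : ℕ) (f : (ℕ × ℕ) → ℕ) : (ℕ × ℕ) → ℕ := fun b => Equiv.swap i (i + 1) (f b)

/-- Column-reading order on boxes: by column (left to right), then by row (top to bottom). -/
def colLt (b b' : ℕ × ℕ) : Prop := b.2 < b'.2 ∨ (b.2 = b'.2 ∧ b.1 < b'.1)

namespace SkewShape

/-- The column reading tableau `C` of the skew shape: enter `1, …, n` consecutively down
the columns, filling the columns from left to right. -/
def colReading (sh : SkewShape) : (ℕ × ℕ) → ℕ :=
  fun b => if b ∈ sh.cells then 1 + (sh.cells.filter fun b' => colLt b' b).card else 0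

/-- The coefficient `a_{i,j}(T) = 1 / (ct(T(j)) - ct(T(i)))`. -/
def aIJ (sh : SkewShape) (f : (ℕ × ℕ) → ℕ) (i j : ℕ) : ℂ :=
  1 / ((ctZ (sh.boxOf f j) : ℂ) - (ctZ (sh.boxOf f i) : ℂ))

/-- The coefficient `a_i(T) = a_{i,i+1}(T)`. -/
def aI (sh : SkewShape) (f : (ℕ × ℕ) → ℕ) (i : ℕ) : ℂ := sh.aIJ f i (i + 1)

/-- The seminormal basis vector `v_f` (or `0` if `f` is not standard). -/
def vOf (sh : SkewShape) (f : (ℕ × ℕ) → ℕ) : sh.SYTt →₀ ℂ :=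
  if h : f ∈ sh.SYT then Finsupp.single ⟨f, h⟩ 1 else 0

/-- The seminormal operator of the simple transposition `s_i`:
`σ_i v_T = a_i(T) v_T + (1 + a_i(T)) v_{s_i(T)}`. -/
def semiOp (sh : SkewShape) (i : ℕ) : (sh.SYTt →₀ ℂ) →ₗ[ℂ] (sh.SYTt →₀ ℂ) :=
  Finsupp.lsum ℂ fun T : sh.SYTt =>
    LinearMap.toSpanSingleton ℂ _
      (sh.aI T.1 i • sh.vOf T.1 + (1 + sh.aI T.1 i) • sh.vOf (sApply i T.1))

/-- `opWord sh [i_1, …, i_k] = σ_{i_1} ∘ σ_{i_2} ∘ ⋯ ∘ σ_{i_k}`. -/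
def opWord (sh : SkewShape) : List ℕ → ((sh.SYTt →₀ ℂ) →ₗ[ℂ] (sh.SYTt →₀ ℂ))
  | [] => LinearMap.id
  | i :: is => semiOp sh i ∘ₗ opWord sh is

end SkewShape

/-- The permutation `s_{i_1} s_{i_2} ⋯ s_{i_k}` determined by a list of indices. -/
def wordProd (l : List ℕ) : Equiv.Perm ℕ := (l.map fun i => Equiv.swap i (i + 1)).prod

/-- The letters of the word index simple transpositions `s_1, …, s_{n-1}` of `S_n`. -/
def IsSnWord (n : ℕ) (l : List ℕ) : Prop := ∀ i ∈ l, 1 ≤ i ∧ i + 1 ≤ n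

/-- `l` is a reduced word for `w` in `S_n`. -/
def IsReducedWord (n : ℕ) (w : Equiv.Perm ℕ) (l : List ℕ) : Prop :=
  IsSnWord n l ∧ wordProd l = w ∧
    ∀ l' : List ℕ, IsSnWord n l' → wordProd l' = w → l.length ≤ l'.length

/-- The Coxeter length of `w` in `S_n`: the minimal number of simple transpositions
in a word for `w`. -/
def permLength (n : ℕ) (w : Equiv.Perm ℕ) : ℕ :=
  sInf {k | ∃ l : List ℕ, IsSnWord n l ∧ l.length = k ∧ wordProd l = w}

/-- Bruhat order on `S_n`: `σ ≤ τ` iff some reduced word for `τ` contains a subword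
that is a reduced word for `σ`. -/
def BruhatLE (n : ℕ) (σ τ : Equiv.Perm ℕ) : Prop :=
  ∃ lτ : List ℕ, IsReducedWord n τ lτ ∧ ∃ lσ : List ℕ, lσ.Sublist lτ ∧ IsReducedWord n σ lσ

namespace SkewShape

/-- `w` is the word `w_f` of the tableau `f`: `w(C) = f`, with `w` fixing everything
outside `{1, …, n}`. -/
def IsWordOf (sh : SkewShape) (f : (ℕ × ℕ) → ℕ) (w : Equiv.Perm ℕ) : Prop :=
  (∀ b ∈ sh.cells, w (sh.colReading b) = f b) ∧ ∀ m, m ∉ Finset.Icc 1 sh.nb → w m = m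

/-- Bruhat order on standard tableaux: `S ≤ T` iff `w_S ≤ w_T` in Bruhat order on `S_n`. -/
def tabLE (sh : SkewShape) (f g : (ℕ × ℕ) → ℕ) : Prop :=
  ∃ wf wg : Equiv.Perm ℕ, sh.IsWordOf f wf ∧ sh.IsWordOf g wg ∧ BruhatLE sh.nb wf wg

end SkewShape

/-- Apply the letters of a list, left to right, to a filling. -/
def applyWord : List ℕ → ((ℕ × ℕ) → ℕ) → ((ℕ × ℕ) → ℕ)
  | [], f => f
  | i :: is, f => applyWord is (sApply i f)

namespace SkewShape

/-- `(f, [i_1, …, i_k])` is a path `f →^{s_{i_1}} ⋯ →^{s_{i_k}}` in the weak Bruhat graph: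
every tableau along the way is standard. -/
def IsPath (sh : SkewShape) : ((ℕ × ℕ) → ℕ) → List ℕ → Prop
  | f, [] => f ∈ sh.SYT
  | f, i :: is => f ∈ sh.SYT ∧ sh.IsPath (sApply i f) is

/-- `(f, [i_1, …, i_k], [z_1, …, z_k])` is a subpath of the path starting at `f` with letters
`[i_1, …, i_k]`; at step `j` one moves by `s_{i_j}` if `z_j = true` and waits otherwise.
All intermediate tableaux must be standard. -/
def IsSubpath (sh : SkewShape) : ((ℕ × ℕ) → ℕ) → List ℕ → List Bool → Prop
  | f, [], [] => f ∈ sh.SYT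
  | f, i :: is, z :: zs => f ∈ sh.SYT ∧ sh.IsSubpath (if z then sApply i f else f) is zs
  | _, _, _ => False

end SkewShape

/-- The tableau at which a subpath terminates. -/
def subEnd : ((ℕ × ℕ) → ℕ) → List ℕ → List Bool → ((ℕ × ℕ) → ℕ)
  | f, [], _ => f
  | f, _ :: _, [] => f
  | f, i :: is, z :: zs => subEnd (if z then sApply i f else f) is zs

namespace SkewShape

/-- The `π`-weight of a subpath: the product of `a_{i_j}(S_{j-1})` over waiting steps and
`1 + a_{i_j}(S_{j-1})` over moving steps. -/
def subWeight (sh : SkewShape) : ((ℕ × ℕ) → ℕ) → List ℕ → List Bool → ℂ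
  | _, [], _ => 1
  | _, _ :: _, [] => 1
  | f, i :: is, z :: zs =>
      (if z then 1 + sh.aI f i else sh.aI f i) * sh.subWeight (if z then sApply i f else f) is zs

/-- The transition coefficient computed from a path: the sum of `π`-weights of all subpaths
of the path `(f₀, is)` terminating at `g`. -/
def pathCoeff (sh : SkewShape) (f₀ : (ℕ × ℕ) → ℕ) (is : List ℕ) (g : (ℕ × ℕ) → ℕ) : ℂ :=
  ∑ zs : Fin is.length → Bool,
    if sh.IsSubpath f₀ is (List.ofFn zs) ∧ subEnd f₀ is (List.ofFn zs) = g then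
      sh.subWeight f₀ is (List.ofFn zs)
    else 0

/-- The coefficient of `v_g` in `(σ_{i_1} ∘ ⋯ ∘ σ_{i_k})(v_C)` (or `0` if `g` is not
standard). -/
def natCoeff (sh : SkewShape) (l : List ℕ) (g : (ℕ × ℕ) → ℕ) : ℂ :=
  if h : g ∈ sh.SYT then (sh.opWord l (sh.vOf sh.colReading)) ⟨g, h⟩ else 0

end SkewShape

end

/-! ### Auxiliary development for the proof -/

noncomputable section AuxDev

open Equiv Function

/-- Two boxes are adjacent: `b'` is immediately to the right of or below `b`. -/
def BoxAdj (b b' : ℕ × ℕ) : Prop := b' = (b.1, b.2 + 1) ∨ b' = (b.1 + 1, b.2)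

namespace SkewShape

variable {sh : SkewShape} {f : (ℕ × ℕ) → ℕ} {k : ℕ}

lemma cell_between {x1 y1 x2 y2 x y : ℕ} (h1 : (x1, y1) ∈ sh.cells) (h2 : (x2, y2) ∈ sh.cells)
    (hx1 : x1 ≤ x) (hx2 : x ≤ x2) (hy1 : y1 ≤ y) (hy2 : y ≤ y2) : (x, y) ∈ sh.cells := by
  simp only [cells, Finset.mem_sdiff, YoungDiagram.mem_cells] at *
  exact ⟨sh.lam.up_left_mem hx2 hy2 h2.1, fun hm => h1.2 (sh.mu.up_left_mem hx1 hy1 hm)⟩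

lemma mem_Icc_of_mem (hf : sh.IsFilling f) {p : ℕ × ℕ} (hp : p ∈ sh.cells) :
    f p ∈ Finset.Icc 1 sh.nb := by
  have := hf.1.mapsTo hp
  simpa using this

lemma boxOf_mem (hf : sh.IsFilling f) {m : ℕ} (hm : m ∈ Finset.Icc 1 sh.nb) :
    sh.boxOf f m ∈ sh.cells := by
  obtain ⟨p, hp, hfp⟩ := hf.1.surjOn (Finset.mem_coe.mpr hm)
  exact Function.invFunOn_mem ⟨p, hp, hfp⟩

lemma apply_boxOf (hf : sh.IsFilling f) {m : ℕ} (hm : m ∈ Finset.Icc 1 sh.nb) :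
    f (sh.boxOf f m) = m := by
  obtain ⟨p, hp, hfp⟩ := hf.1.surjOn (Finset.mem_coe.mpr hm)
  exact Function.invFunOn_eq ⟨p, hp, hfp⟩

lemma boxOf_apply (hf : sh.IsFilling f) {p : ℕ × ℕ} (hp : p ∈ sh.cells) :
    sh.boxOf f (f p) = p := by
  have hm : f p ∈ Finset.Icc 1 sh.nb := mem_Icc_of_mem hf hp
  exact hf.1.injOn (boxOf_mem hf hm) hp (apply_boxOf hf hm)

lemma swap_mem_Icc {n m : ℕ} (hk1 : 1 ≤ k) (hk2 : k + 1 ≤ n) (hm : m ∈ Finset.Icc 1 n) :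
    Equiv.swap k (k + 1) m ∈ Finset.Icc 1 n := by
  rcases eq_or_ne m k with rfl | h1
  · rw [Equiv.swap_apply_left]; simp at *; omega
  rcases eq_or_ne m (k + 1) with rfl | h2
  · rw [Equiv.swap_apply_right]; simp at *; omega
  · rw [Equiv.swap_apply_of_ne_of_ne h1 h2]; exact hm

lemma isFilling_sApply (hf : sh.IsFilling f) (hk1 : 1 ≤ k) (hk2 : k + 1 ≤ sh.nb) :
    sh.IsFilling (sApply k f) := by
  refine ⟨⟨fun p hp => ?_, fun p hp q hq h => ?_, fun m hm => ?_⟩, fun b hb => ?_⟩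
  · have := hf.1.mapsTo hp
    simp only [Finset.mem_coe] at *
    exact swap_mem_Icc hk1 hk2 this
  · exact hf.1.injOn hp hq ((Equiv.swap k (k + 1)).injective h)
  · simp only [Finset.mem_coe] at hm
    obtain ⟨p, hp, hfp⟩ := hf.1.surjOn (Finset.mem_coe.mpr (swap_mem_Icc hk1 hk2 hm))
    exact ⟨p, hp, by simp only [sApply, hfp, Equiv.swap_apply_self]⟩
  · simp only [sApply, hf.2 b hb]
    exact Equiv.swap_apply_of_ne_of_ne (by omega) (by omega)

lemma boxOf_sApply (hf : sh.IsFilling f) (hk1 : 1 ≤ k) (hk2 : k + 1 ≤ sh.nb) {m : ℕ}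
    (hm : m ∈ Finset.Icc 1 sh.nb) :
    sh.boxOf (sApply k f) m = sh.boxOf f (Equiv.swap k (k + 1) m) := by
  have hm' : Equiv.swap k (k + 1) m ∈ Finset.Icc 1 sh.nb := swap_mem_Icc hk1 hk2 hm
  have hp : sh.boxOf f (Equiv.swap k (k + 1) m) ∈ sh.cells := boxOf_mem hf hm'
  have hval : (sApply k f) (sh.boxOf f (Equiv.swap k (k + 1) m)) = m := by
    simp only [sApply, apply_boxOf hf hm', Equiv.swap_apply_self]
  have h := boxOf_apply (isFilling_sApply hf hk1 hk2) hp
  rw [hval] at h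
  exact h

lemma boxOf_sApply_self (hf : sh.IsFilling f) (hk1 : 1 ≤ k) (hk2 : k + 1 ≤ sh.nb) :
    sh.boxOf (sApply k f) k = sh.boxOf f (k + 1) := by
  rw [boxOf_sApply hf hk1 hk2 (by simp; omega), Equiv.swap_apply_left]

lemma boxOf_sApply_succ (hf : sh.IsFilling f) (hk1 : 1 ≤ k) (hk2 : k + 1 ≤ sh.nb) :
    sh.boxOf (sApply k f) (k + 1) = sh.boxOf f k := by
  rw [boxOf_sApply hf hk1 hk2 (by simp; omega), Equiv.swap_apply_right]

lemma boxOf_sApply_other (hf : sh.IsFilling f) (hk1 : 1 ≤ k) (hk2 : k + 1 ≤ sh.nb) {m : ℕ}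
    (hm : m ∈ Finset.Icc 1 sh.nb) (h1 : m ≠ k) (h2 : m ≠ k + 1) :
    sh.boxOf (sApply k f) m = sh.boxOf f m := by
  rw [boxOf_sApply hf hk1 hk2 hm, Equiv.swap_apply_of_ne_of_ne h1 h2]

/-! Chains of entries -/

lemma entry_add_le_col (hs : f ∈ sh.SYT) (x y : ℕ) (h1 : (x, y) ∈ sh.cells) :
    ∀ d, (x + d, y) ∈ sh.cells → f (x, y) + d ≤ f (x + d, y) := by
  intro d
  induction d with
  | zero => intro _; simp
  | succ d ih =>
    intro h2
    rw [← Nat.add_assoc] at h2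
    have hmid : (x + d, y) ∈ sh.cells := cell_between h1 h2 (by omega) (by omega) le_rfl le_rfl
    have hlt : f (x + d, y) < f (x + d + 1, y) := hs.2.2 (x + d) y hmid h2
    have := ih hmid
    show f (x, y) + (d + 1) ≤ f (x + d + 1, y)
    omega

lemma entry_add_le_row (hs : f ∈ sh.SYT) (x y : ℕ) (h1 : (x, y) ∈ sh.cells) :
    ∀ d, (x, y + d) ∈ sh.cells → f (x, y) + d ≤ f (x, y + d) := by
  intro d
  induction d with
  | zero => intro _; simp
  | succ d ih =>
    intro h2
    rw [← Nat.add_assoc] at h2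
    have hmid : (x, y + d) ∈ sh.cells := cell_between h1 h2 le_rfl le_rfl (by omega) (by omega)
    have hlt : f (x, y + d) < f (x, y + d + 1) := hs.2.1 x (y + d) hmid h2
    have := ih hmid
    show f (x, y) + (d + 1) ≤ f (x, y + d + 1)
    omega

lemma entry_chain (hs : f ∈ sh.SYT) {p q : ℕ × ℕ} (hp : p ∈ sh.cells) (hq : q ∈ sh.cells)
    (hx : p.1 ≤ q.1) (hy : p.2 ≤ q.2) : f p + (q.1 - p.1) + (q.2 - p.2) ≤ f q := by
  obtain ⟨x, y⟩ := p; obtain ⟨x', y'⟩ := q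
  simp only at hx hy
  obtain ⟨d, rfl⟩ : ∃ d, x' = x + d := ⟨x' - x, by omega⟩
  obtain ⟨e, rfl⟩ : ∃ e, y' = y + e := ⟨y' - y, by omega⟩
  have hmid : (x + d, y) ∈ sh.cells := cell_between hp hq (by omega) (by omega) (by omega) (by omega)
  have h1 := entry_add_le_col hs x y hp d hmid
  have h2 := entry_add_le_row hs (x + d) y hmid e hq
  simp only
  omega

/-! ### The key combinatorial dichotomy -/

lemma sApply_not_mem_of_adj (hs : f ∈ sh.SYT) (hk1 : 1 ≤ k) (hk2 : k + 1 ≤ sh.nb)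
    (hadj : BoxAdj (sh.boxOf f k) (sh.boxOf f (k + 1))) : sApply k f ∉ sh.SYT := by
  intro hmem
  have hkm : k ∈ Finset.Icc 1 sh.nb := by simp; omega
  have hkm' : k + 1 ∈ Finset.Icc 1 sh.nb := by simp; omega
  have hb : sh.boxOf f k ∈ sh.cells := boxOf_mem hs.1 hkm
  have hb' : sh.boxOf f (k + 1) ∈ sh.cells := boxOf_mem hs.1 hkm'
  have e1 : sApply k f (sh.boxOf f k) = k + 1 := by
    simp only [sApply, apply_boxOf hs.1 hkm, Equiv.swap_apply_left]
  have e2 : sApply k f (sh.boxOf f (k + 1)) = k := by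
    simp only [sApply, apply_boxOf hs.1 hkm', Equiv.swap_apply_right]
  rcases hadj with h | h
  · have := hmem.2.1 (sh.boxOf f k).1 (sh.boxOf f k).2 hb (by rw [← h]; exact hb')
    rw [e1, ← h, e2] at this
    omega
  · have := hmem.2.2 (sh.boxOf f k).1 (sh.boxOf f k).2 hb (by rw [← h]; exact hb')
    rw [e1, ← h, e2] at this
    omega

lemma key_lt (hs : f ∈ sh.SYT) (hk1 : 1 ≤ k) (hk2 : k + 1 ≤ sh.nb)
    (hadj : ¬ BoxAdj (sh.boxOf f k) (sh.boxOf f (k + 1)))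
    {p q : ℕ × ℕ} (hp : p ∈ sh.cells) (hq : q ∈ sh.cells) (hpq : f p < f q)
    (hBadj : BoxAdj p q) : sApply k f p < sApply k f q := by
  show Equiv.swap k (k + 1) (f p) < Equiv.swap k (k + 1) (f q)
  by_cases h1 : f p = k
  · have hpb : p = sh.boxOf f k := by rw [← h1, boxOf_apply hs.1 hp]
    by_cases h2 : f q = k + 1
    · exfalso
      apply hadj
      have hqb : q = sh.boxOf f (k + 1) := by rw [← h2, boxOf_apply hs.1 hq]
      rw [← hpb, ← hqb]
      exact hBadj
    · have hge : k + 2 ≤ f q := by omega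
      rw [h1, Equiv.swap_apply_left, Equiv.swap_apply_of_ne_of_ne (by omega) (by omega)]
      omega
  by_cases h1' : f p = k + 1
  · rw [h1', Equiv.swap_apply_right, Equiv.swap_apply_of_ne_of_ne (by omega) (by omega)]
    omega
  by_cases h2 : f q = k
  · rw [h2, Equiv.swap_apply_left, Equiv.swap_apply_of_ne_of_ne h1 h1']
    omega
  by_cases h2' : f q = k + 1
  · rw [h2', Equiv.swap_apply_right, Equiv.swap_apply_of_ne_of_ne h1 h1']
    omega
  · rw [Equiv.swap_apply_of_ne_of_ne h1 h1', Equiv.swap_apply_of_ne_of_ne h2 h2']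
    exact hpq

lemma sApply_mem_of_nonadj (hs : f ∈ sh.SYT) (hk1 : 1 ≤ k) (hk2 : k + 1 ≤ sh.nb)
    (hadj : ¬ BoxAdj (sh.boxOf f k) (sh.boxOf f (k + 1))) : sApply k f ∈ sh.SYT :=
  ⟨isFilling_sApply hs.1 hk1 hk2,
    fun x y hp hq => key_lt hs hk1 hk2 hadj hp hq (hs.2.1 x y hp hq) (Or.inl rfl),
    fun x y hp hq => key_lt hs hk1 hk2 hadj hp hq (hs.2.2 x y hp hq) (Or.inr rfl)⟩

lemma sApply_mem_iff (hs : f ∈ sh.SYT) (hk1 : 1 ≤ k) (hk2 : k + 1 ≤ sh.nb) :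
    sApply k f ∈ sh.SYT ↔ ¬ BoxAdj (sh.boxOf f k) (sh.boxOf f (k + 1)) :=
  ⟨fun h hadj => sApply_not_mem_of_adj hs hk1 hk2 hadj h, sApply_mem_of_nonadj hs hk1 hk2⟩

lemma adj_of_not_mem (hs : f ∈ sh.SYT) (hk1 : 1 ≤ k) (hk2 : k + 1 ≤ sh.nb)
    (h : sApply k f ∉ sh.SYT) : BoxAdj (sh.boxOf f k) (sh.boxOf f (k + 1)) := by
  by_contra hadj
  exact h (sApply_mem_of_nonadj hs hk1 hk2 hadj)

lemma ct_diff_of_adj {b b' : ℕ × ℕ} (h : BoxAdj b b') :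
    ctZ b' = ctZ b + 1 ∨ ctZ b' = ctZ b - 1 := by
  rcases h with h | h <;> subst h <;> simp only [ctZ] <;> [left; right] <;> push_cast <;> ring

lemma adj_or_far (hs : f ∈ sh.SYT) (hk1 : 1 ≤ k) (hk2 : k + 1 ≤ sh.nb) :
    BoxAdj (sh.boxOf f k) (sh.boxOf f (k + 1)) ∨
    (ctZ (sh.boxOf f k) + 2 ≤ ctZ (sh.boxOf f (k + 1)) ∨
     ctZ (sh.boxOf f (k + 1)) + 2 ≤ ctZ (sh.boxOf f k)) := by
  have hkm : k ∈ Finset.Icc 1 sh.nb := by simp; omega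
  have hkm' : k + 1 ∈ Finset.Icc 1 sh.nb := by simp; omega
  have hb : sh.boxOf f k ∈ sh.cells := boxOf_mem hs.1 hkm
  have hb' : sh.boxOf f (k + 1) ∈ sh.cells := boxOf_mem hs.1 hkm'
  have hfb : f (sh.boxOf f k) = k := apply_boxOf hs.1 hkm
  have hfb' : f (sh.boxOf f (k + 1)) = k + 1 := apply_boxOf hs.1 hkm'
  set b := sh.boxOf f k
  set b' := sh.boxOf f (k + 1)
  rcases le_or_gt b.1 b'.1 with hx | hx
  · rcases le_or_gt b.2 b'.2 with hy | hy
    · have hch := entry_chain hs hb hb' hx hy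
      rw [hfb, hfb'] at hch
      left
      have hne : b ≠ b' := fun h => by rw [h, hfb'] at hfb; omega
      have h1 : b'.1 = b.1 ∧ b'.2 = b.2 + 1 ∨ b'.1 = b.1 + 1 ∧ b'.2 = b.2 := by
        rcases Nat.eq_or_lt_of_le hx with hx' | hx'
        · left
          refine ⟨hx'.symm, ?_⟩
          rcases Nat.eq_or_lt_of_le hy with hy' | hy'
          · exfalso; exact hne (Prod.ext hx' hy')
          · omega
        · right; omega
      rcases h1 with ⟨u, v⟩ | ⟨u, v⟩
      · left; exact Prod.ext u v
      · right; exact Prod.ext u v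
    · rcases Nat.eq_or_lt_of_le hx with hx' | hx'
      · exfalso
        have hch := entry_chain hs hb' hb (by omega) (by omega)
        rw [hfb, hfb'] at hch
        omega
      · right; right
        simp only [ctZ]
        omega
  · rcases le_or_gt b'.2 b.2 with hy | hy
    · exfalso
      have hch := entry_chain hs hb' hb (by omega) hy
      rw [hfb, hfb'] at hch
      omega
    · right; left
      simp only [ctZ]
      omega

lemma ct_far_of_mem (hs : f ∈ sh.SYT) (hk1 : 1 ≤ k) (hk2 : k + 1 ≤ sh.nb)
    (hmem : sApply k f ∈ sh.SYT) :
    ctZ (sh.boxOf f k) + 2 ≤ ctZ (sh.boxOf f (k + 1)) ∨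
    ctZ (sh.boxOf f (k + 1)) + 2 ≤ ctZ (sh.boxOf f k) := by
  rcases adj_or_far hs hk1 hk2 with h | h
  · exact absurd hmem (sApply_not_mem_of_adj hs hk1 hk2 h)
  · exact h

lemma ct_pm_of_not_mem (hs : f ∈ sh.SYT) (hk1 : 1 ≤ k) (hk2 : k + 1 ≤ sh.nb)
    (hmem : sApply k f ∉ sh.SYT) :
    ctZ (sh.boxOf f (k + 1)) = ctZ (sh.boxOf f k) + 1 ∨
    ctZ (sh.boxOf f (k + 1)) = ctZ (sh.boxOf f k) - 1 :=
  ct_diff_of_adj (adj_of_not_mem hs hk1 hk2 hmem)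

/-- No mixed L-shaped configurations of three consecutive entries. -/
lemma no_mixed (hs : f ∈ sh.SYT) (hk1 : 1 ≤ k) (hk2 : k + 2 ≤ sh.nb)
    (h12 : BoxAdj (sh.boxOf f k) (sh.boxOf f (k + 1)))
    (h23 : BoxAdj (sh.boxOf f (k + 1)) (sh.boxOf f (k + 2))) :
    (ctZ (sh.boxOf f (k + 1)) = ctZ (sh.boxOf f k) + 1 ∧
     ctZ (sh.boxOf f (k + 2)) = ctZ (sh.boxOf f (k + 1)) + 1) ∨
    (ctZ (sh.boxOf f (k + 1)) = ctZ (sh.boxOf f k) - 1 ∧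
     ctZ (sh.boxOf f (k + 2)) = ctZ (sh.boxOf f (k + 1)) - 1) := by
  have hkm : k ∈ Finset.Icc 1 sh.nb := by simp; omega
  have hkm' : k + 1 ∈ Finset.Icc 1 sh.nb := by simp; omega
  have hkm'' : k + 2 ∈ Finset.Icc 1 sh.nb := by simp; omega
  have hb1 : sh.boxOf f k ∈ sh.cells := boxOf_mem hs.1 hkm
  have hb2 : sh.boxOf f (k + 1) ∈ sh.cells := boxOf_mem hs.1 hkm'
  have hb3 : sh.boxOf f (k + 2) ∈ sh.cells := boxOf_mem hs.1 hkm''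
  have hfb1 : f (sh.boxOf f k) = k := apply_boxOf hs.1 hkm
  have hfb2 : f (sh.boxOf f (k + 1)) = k + 1 := apply_boxOf hs.1 hkm'
  have hfb3 : f (sh.boxOf f (k + 2)) = k + 2 := apply_boxOf hs.1 hkm''
  obtain ⟨⟨x1, y1⟩, e1⟩ : ∃ p, sh.boxOf f k = p := ⟨_, rfl⟩
  obtain ⟨⟨x2, y2⟩, e2⟩ : ∃ p, sh.boxOf f (k + 1) = p := ⟨_, rfl⟩
  obtain ⟨⟨x3, y3⟩, e3⟩ : ∃ p, sh.boxOf f (k + 2) = p := ⟨_, rfl⟩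
  simp only [e1, e2, e3] at h12 h23 hb1 hb2 hb3 hfb1 hfb2 hfb3 ⊢
  simp only [BoxAdj, Prod.mk.injEq, ctZ] at h12 h23 ⊢
  have himp1 : ¬ (x2 = x1 ∧ y2 = y1 + 1 ∧ x3 = x2 + 1 ∧ y3 = y2) := by
    rintro ⟨hA, hB, hC, hD⟩
    have e : (x3, y3) = (x1 + 1, y1 + 1) := by simp only [Prod.mk.injEq]; omega
    have e' : (x2, y2) = (x1, y1 + 1) := by simp only [Prod.mk.injEq]; omega
    rw [e] at hb3 hfb3
    rw [e'] at hb2 hfb2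
    have hp : (x1 + 1, y1) ∈ sh.cells :=
      cell_between hb1 hb3 (Nat.le_succ _) le_rfl le_rfl (Nat.le_succ _)
    have lt1 : f (x1, y1) < f (x1 + 1, y1) := hs.2.2 x1 y1 hb1 hp
    have lt2 : f (x1 + 1, y1) < f (x1 + 1, y1 + 1) := hs.2.1 (x1 + 1) y1 hp hb3
    have hfp : f (x1 + 1, y1) = k + 1 := by omega
    have heq : (x1 + 1, y1) = (x1, y1 + 1) := by
      rw [← hfb2] at hfp
      exact hs.1.1.injOn hp hb2 hfp
    simp only [Prod.mk.injEq] at heq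
    omega
  have himp2 : ¬ (x2 = x1 + 1 ∧ y2 = y1 ∧ x3 = x2 ∧ y3 = y2 + 1) := by
    rintro ⟨hA, hB, hC, hD⟩
    have e : (x3, y3) = (x1 + 1, y1 + 1) := by simp only [Prod.mk.injEq]; omega
    have e' : (x2, y2) = (x1 + 1, y1) := by simp only [Prod.mk.injEq]; omega
    rw [e] at hb3 hfb3
    rw [e'] at hb2 hfb2
    have hp : (x1, y1 + 1) ∈ sh.cells :=
      cell_between hb1 hb3 le_rfl (Nat.le_succ _) (Nat.le_succ _) le_rfl
    have lt1 : f (x1, y1) < f (x1, y1 + 1) := hs.2.1 x1 y1 hb1 hp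
    have lt2 : f (x1, y1 + 1) < f (x1 + 1, y1 + 1) := hs.2.2 x1 (y1 + 1) hp hb3
    have hfp : f (x1, y1 + 1) = k + 1 := by omega
    have heq : (x1, y1 + 1) = (x1 + 1, y1) := by
      rw [← hfb2] at hfp
      exact hs.1.1.injOn hp hb2 hfp
    simp only [Prod.mk.injEq] at heq
    omega
  rcases h12 with ⟨u1, u2⟩ | ⟨u1, u2⟩ <;> rcases h23 with ⟨v1, v2⟩ | ⟨v1, v2⟩ <;> omega

/-! ### Operator-level lemmas -/

lemma sApply_sApply_same (i : ℕ) (f : (ℕ × ℕ) → ℕ) : sApply i (sApply i f) = f :=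
  funext fun b => Equiv.swap_apply_self _ _ _

lemma sApply_comm_of_disj {i j : ℕ} (h : i + 1 < j ∨ j + 1 < i) (f : (ℕ × ℕ) → ℕ) :
    sApply i (sApply j f) = sApply j (sApply i f) := by
  funext b
  show Equiv.swap i (i + 1) (Equiv.swap j (j + 1) (f b)) =
       Equiv.swap j (j + 1) (Equiv.swap i (i + 1) (f b))
  generalize f b = m
  simp only [Equiv.swap_apply_def]
  split_ifs <;> omega

set_option maxHeartbeats 1000000 in
lemma sApply_braid_eq (i : ℕ) (f : (ℕ × ℕ) → ℕ) :
    sApply i (sApply (i + 1) (sApply i f)) = sApply (i + 1) (sApply i (sApply (i + 1) f)) := by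
  funext b
  show Equiv.swap i (i + 1) (Equiv.swap (i + 1) (i + 1 + 1) (Equiv.swap i (i + 1) (f b))) =
       Equiv.swap (i + 1) (i + 1 + 1) (Equiv.swap i (i + 1) (Equiv.swap (i + 1) (i + 1 + 1) (f b)))
  generalize f b = m
  simp only [Equiv.swap_apply_def]
  split_ifs <;> omega

lemma vOf_not_mem (sh : SkewShape) {f : (ℕ × ℕ) → ℕ} (h : f ∉ sh.SYT) : sh.vOf f = 0 :=
  dif_neg h

lemma vOf_mem' (sh : SkewShape) {f : (ℕ × ℕ) → ℕ} (h : f ∈ sh.SYT) :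
    sh.vOf f = Finsupp.single ⟨f, h⟩ 1 := dif_pos h

lemma semiOp_apply_vOf (sh : SkewShape) (i : ℕ) {f : (ℕ × ℕ) → ℕ} (h : f ∈ sh.SYT) :
    sh.semiOp i (sh.vOf f) =
      sh.aI f i • sh.vOf f + (1 + sh.aI f i) • sh.vOf (sApply i f) := by
  conv_lhs => rw [vOf_mem' sh h]
  rw [semiOp]
  erw [Finsupp.lsum_single]
  rw [LinearMap.toSpanSingleton_apply, one_smul]

lemma op_ext {sh : SkewShape} {φ ψ : (sh.SYTt →₀ ℂ) →ₗ[ℂ] (sh.SYTt →₀ ℂ)}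
    (h : ∀ f, f ∈ sh.SYT → φ (sh.vOf f) = ψ (sh.vOf f)) : φ = ψ := by
  apply Finsupp.lhom_ext
  intro T c
  have h1 : (Finsupp.single T c : sh.SYTt →₀ ℂ) = c • Finsupp.single T 1 := by
    rw [Finsupp.smul_single, smul_eq_mul, mul_one]
  have h2 : (Finsupp.single T 1 : sh.SYTt →₀ ℂ) = sh.vOf T.1 := (vOf_mem' sh T.2).symm
  rw [h1, h2, map_smul, map_smul, h T.1 T.2]

lemma aI_boxes (sh : SkewShape) (f : (ℕ × ℕ) → ℕ) (i : ℕ) :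
    sh.aI f i = 1 / ((ctZ (sh.boxOf f (i + 1)) : ℂ) - (ctZ (sh.boxOf f i) : ℂ)) := rfl

lemma aI_sApply_self (sh : SkewShape) {f : (ℕ × ℕ) → ℕ} (hf : sh.IsFilling f) {k : ℕ}
    (hk1 : 1 ≤ k) (hk2 : k + 1 ≤ sh.nb) : sh.aI (sApply k f) k = - sh.aI f k := by
  rw [aI_boxes, aI_boxes, boxOf_sApply_self hf hk1 hk2, boxOf_sApply_succ hf hk1 hk2]
  rw [show (ctZ (sh.boxOf f k) : ℂ) - (ctZ (sh.boxOf f (k + 1)) : ℂ) =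
    -((ctZ (sh.boxOf f (k + 1)) : ℂ) - (ctZ (sh.boxOf f k) : ℂ)) by ring]
  rw [one_div, one_div, inv_neg]

/-! ### The quadratic relation -/

theorem rel_sq (sh : SkewShape) (i : ℕ) (h1 : 1 ≤ i) (h2 : i + 1 ≤ sh.nb) :
    sh.semiOp i ∘ₗ sh.semiOp i = LinearMap.id := by
  apply op_ext
  intro f hf
  rw [LinearMap.comp_apply, LinearMap.id_apply]
  rw [semiOp_apply_vOf sh i hf, map_add, map_smul, map_smul, semiOp_apply_vOf sh i hf]
  by_cases hA : sApply i f ∈ sh.SYT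
  · rw [semiOp_apply_vOf sh i hA, aI_sApply_self sh hf.1 h1 h2, sApply_sApply_same]
    module
  · rw [vOf_not_mem sh hA]
    simp only [map_zero, smul_zero, add_zero, smul_smul]
    have ha : sh.aI f i * sh.aI f i = 1 := by
      rcases ct_pm_of_not_mem hf h1 h2 hA with h | h <;>
      · rw [aI_boxes, h]
        push_cast
        field_simp
        ring
    rw [ha, one_smul]

/-! ### The commutation relation -/

lemma aI_sApply_disj (sh : SkewShape) {f : (ℕ × ℕ) → ℕ} (hf : sh.IsFilling f) {i j : ℕ}
    (hi1 : 1 ≤ i) (hi2 : i + 1 ≤ sh.nb) (hj1 : 1 ≤ j) (hj2 : j + 1 ≤ sh.nb)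
    (hij : i + 1 < j ∨ j + 1 < i) : sh.aI (sApply j f) i = sh.aI f i := by
  rw [aI_boxes, aI_boxes,
    boxOf_sApply_other hf hj1 hj2 (by simp; omega) (by omega) (by omega),
    boxOf_sApply_other hf hj1 hj2 (by simp; omega) (by omega) (by omega)]

lemma persist (sh : SkewShape) {f : (ℕ × ℕ) → ℕ} (hs : f ∈ sh.SYT) {i j : ℕ}
    (hi1 : 1 ≤ i) (hi2 : i + 1 ≤ sh.nb) (hj1 : 1 ≤ j) (hj2 : j + 1 ≤ sh.nb)
    (hij : i + 1 < j ∨ j + 1 < i)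
    (hB : sApply j f ∈ sh.SYT) (hA : sApply i f ∉ sh.SYT) :
    sApply i (sApply j f) ∉ sh.SYT := by
  have hadj := adj_of_not_mem hs hi1 hi2 hA
  have e1 : sh.boxOf (sApply j f) i = sh.boxOf f i :=
    boxOf_sApply_other hs.1 hj1 hj2 (by simp; omega) (by omega) (by omega)
  have e2 : sh.boxOf (sApply j f) (i + 1) = sh.boxOf f (i + 1) :=
    boxOf_sApply_other hs.1 hj1 hj2 (by simp; omega) (by omega) (by omega)
  apply sApply_not_mem_of_adj hB hi1 hi2
  rw [e1, e2]
  exact hadj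

theorem rel_comm (sh : SkewShape) (i j : ℕ) (hi1 : 1 ≤ i) (hi2 : i + 1 ≤ sh.nb)
    (hj1 : 1 ≤ j) (hj2 : j + 1 ≤ sh.nb) (hij : i + 1 < j ∨ j + 1 < i) :
    sh.semiOp i ∘ₗ sh.semiOp j = sh.semiOp j ∘ₗ sh.semiOp i := by
  have hij' : j + 1 < i ∨ i + 1 < j := hij.symm
  apply op_ext
  intro f hf
  simp only [LinearMap.comp_apply]
  rw [semiOp_apply_vOf sh j hf, semiOp_apply_vOf sh i hf, map_add, map_add,
    map_smul, map_smul, map_smul, map_smul, semiOp_apply_vOf sh j hf,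
    semiOp_apply_vOf sh i hf]
  by_cases hA : sApply i f ∈ sh.SYT <;> by_cases hB : sApply j f ∈ sh.SYT
  · rw [semiOp_apply_vOf sh i hB, semiOp_apply_vOf sh j hA,
      aI_sApply_disj sh hf.1 hi1 hi2 hj1 hj2 hij,
      aI_sApply_disj sh hf.1 hj1 hj2 hi1 hi2 hij',
      sApply_comm_of_disj hij]
    module
  · have hBA : sApply j (sApply i f) ∉ sh.SYT :=
      persist sh hf hj1 hj2 hi1 hi2 hij' hA hB
    rw [vOf_not_mem sh hB, semiOp_apply_vOf sh j hA,
      aI_sApply_disj sh hf.1 hj1 hj2 hi1 hi2 hij',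
      vOf_not_mem sh hBA, map_zero]
    module
  · have hAB : sApply i (sApply j f) ∉ sh.SYT :=
      persist sh hf hi1 hi2 hj1 hj2 hij hB hA
    rw [vOf_not_mem sh hA, semiOp_apply_vOf sh i hB,
      aI_sApply_disj sh hf.1 hi1 hi2 hj1 hj2 hij,
      vOf_not_mem sh hAB, map_zero]
    module
  · rw [vOf_not_mem sh hA, vOf_not_mem sh hB, map_zero, map_zero]
    module

/-! ### The braid relation -/

set_option maxHeartbeats 4000000 in
theorem rel_braid (sh : SkewShape) (i : ℕ) (h1 : 1 ≤ i) (h2 : i + 2 ≤ sh.nb) :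
    sh.semiOp i ∘ₗ sh.semiOp (i + 1) ∘ₗ sh.semiOp i =
      sh.semiOp (i + 1) ∘ₗ sh.semiOp i ∘ₗ sh.semiOp (i + 1) := by
  have hi2 : i + 1 ≤ sh.nb := by omega
  have hj1 : 1 ≤ i + 1 := by omega
  have h2' : i + 1 + 1 ≤ sh.nb := by omega
  apply op_ext
  intro f hf
  simp only [LinearMap.comp_apply]
  have hfil := hf.1
  have hA_fil : sh.IsFilling (sApply i f) := isFilling_sApply hfil h1 hi2
  have hB_fil : sh.IsFilling (sApply (i + 1) f) := isFilling_sApply hfil hj1 h2'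
  have hmi : i ∈ Finset.Icc 1 sh.nb := by simp; omega
  have hmi1 : i + 1 ∈ Finset.Icc 1 sh.nb := by simp; omega
  have hmi2 : i + 1 + 1 ∈ Finset.Icc 1 sh.nb := by simp; omega
  -- boxes
  have ba1 : sh.boxOf (sApply i f) i = sh.boxOf f (i + 1) := boxOf_sApply_self hfil h1 hi2
  have ba2 : sh.boxOf (sApply i f) (i + 1) = sh.boxOf f i := boxOf_sApply_succ hfil h1 hi2
  have ba3 : sh.boxOf (sApply i f) (i + 1 + 1) = sh.boxOf f (i + 1 + 1) :=
    boxOf_sApply_other hfil h1 hi2 hmi2 (by omega) (by omega)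
  have bb1 : sh.boxOf (sApply (i + 1) f) i = sh.boxOf f i :=
    boxOf_sApply_other hfil hj1 h2' hmi (by omega) (by omega)
  have bb2 : sh.boxOf (sApply (i + 1) f) (i + 1) = sh.boxOf f (i + 1 + 1) :=
    boxOf_sApply_self hfil hj1 h2'
  have bb3 : sh.boxOf (sApply (i + 1) f) (i + 1 + 1) = sh.boxOf f (i + 1) :=
    boxOf_sApply_succ hfil hj1 h2'
  have bc1 : sh.boxOf (sApply (i + 1) (sApply i f)) i = sh.boxOf f (i + 1) := by
    rw [boxOf_sApply_other hA_fil hj1 h2' hmi (by omega) (by omega), ba1]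
  have bc2 : sh.boxOf (sApply (i + 1) (sApply i f)) (i + 1) = sh.boxOf f (i + 1 + 1) := by
    rw [boxOf_sApply_self hA_fil hj1 h2', ba3]
  have bd1 : sh.boxOf (sApply i (sApply (i + 1) f)) (i + 1) = sh.boxOf f i := by
    rw [boxOf_sApply_succ hB_fil h1 hi2, bb1]
  have bd2 : sh.boxOf (sApply i (sApply (i + 1) f)) (i + 1 + 1) = sh.boxOf f (i + 1) := by
    rw [boxOf_sApply_other hB_fil h1 hi2 hmi2 (by omega) (by omega), bb3]
  -- aI values
  have hv1 : sh.aI (sApply i f) i = - sh.aI f i := aI_sApply_self sh hfil h1 hi2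
  have hv4 : sh.aI (sApply (i + 1) f) (i + 1) = - sh.aI f (i + 1) :=
    aI_sApply_self sh hfil hj1 h2'
  have hv2 : sh.aI (sApply i f) (i + 1) =
      1 / ((ctZ (sh.boxOf f (i + 1 + 1)) : ℂ) - (ctZ (sh.boxOf f i) : ℂ)) := by
    rw [aI_boxes, ba3, ba2]
  have hv3 : sh.aI (sApply (i + 1) f) i =
      1 / ((ctZ (sh.boxOf f (i + 1 + 1)) : ℂ) - (ctZ (sh.boxOf f i) : ℂ)) := by
    rw [aI_boxes, bb2, bb1]
  have hv5 : sh.aI (sApply (i + 1) (sApply i f)) i = sh.aI f (i + 1) := by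
    rw [aI_boxes, bc2, bc1, aI_boxes]
  have hv6 : sh.aI (sApply i (sApply (i + 1) f)) (i + 1) = sh.aI f i := by
    rw [aI_boxes, bd2, bd1, aI_boxes]
  -- structural identities
  have hss : sApply i (sApply i f) = f := sApply_sApply_same i f
  have hss2 : sApply (i + 1) (sApply (i + 1) f) = f := sApply_sApply_same (i + 1) f
  have hbr : sApply (i + 1) (sApply i (sApply (i + 1) f)) =
      sApply i (sApply (i + 1) (sApply i f)) := (sApply_braid_eq i f).symm
  -- operator expansions (always valid)
  have hE1 := semiOp_apply_vOf sh i hf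
  have hE2 := semiOp_apply_vOf sh (i + 1) hf
  -- universal nonzero content differences
  have hne1 : ctZ (sh.boxOf f (i + 1)) - ctZ (sh.boxOf f i) ≠ 0 := by
    rcases adj_or_far hf h1 hi2 with h | h
    · rcases ct_diff_of_adj h with h' | h' <;> omega
    · omega
  have hne2 : ctZ (sh.boxOf f (i + 1 + 1)) - ctZ (sh.boxOf f (i + 1)) ≠ 0 := by
    rcases adj_or_far hf hj1 h2' with h | h
    · rcases ct_diff_of_adj h with h' | h' <;> omega
    · omega
  have hz1 : ((ctZ (sh.boxOf f (i + 1)) : ℂ) - (ctZ (sh.boxOf f i) : ℂ)) ≠ 0 := by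
    have h := (Int.cast_ne_zero (α := ℂ)).mpr hne1
    push_cast at h
    exact h
  have hz2 : ((ctZ (sh.boxOf f (i + 1 + 1)) : ℂ) - (ctZ (sh.boxOf f (i + 1)) : ℂ)) ≠ 0 := by
    have h := (Int.cast_ne_zero (α := ℂ)).mpr hne2
    push_cast at h
    exact h
  by_cases hA : sApply i f ∈ sh.SYT
  · have hEA := semiOp_apply_vOf sh (i + 1) hA
    have hEA2 := semiOp_apply_vOf sh i hA
    have hfar1 := ct_far_of_mem hf h1 hi2 hA
    have hCiff : sApply (i + 1) (sApply i f) ∈ sh.SYT ↔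
        ¬ BoxAdj (sh.boxOf f i) (sh.boxOf f (i + 1 + 1)) := by
      rw [← ba2, ← ba3]
      exact sApply_mem_iff hA hj1 h2'
    by_cases hB : sApply (i + 1) f ∈ sh.SYT
    · -- Case 1 : A and B standard
      have hEB := semiOp_apply_vOf sh i hB
      have hEB2 := semiOp_apply_vOf sh (i + 1) hB
      have hfar2 := ct_far_of_mem hf hj1 h2' hB
      have hDiff : sApply i (sApply (i + 1) f) ∈ sh.SYT ↔
          ¬ BoxAdj (sh.boxOf f i) (sh.boxOf f (i + 1 + 1)) := by
        rw [← bb1, ← bb2]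
        exact sApply_mem_iff hB h1 hi2
      by_cases hC : sApply (i + 1) (sApply i f) ∈ sh.SYT
      · -- Case 1a : full orbit
        have hD : sApply i (sApply (i + 1) f) ∈ sh.SYT := hDiff.mpr (hCiff.mp hC)
        have hEC := semiOp_apply_vOf sh i hC
        have hED := semiOp_apply_vOf sh (i + 1) hD
        have hfar3' := ct_far_of_mem hA hj1 h2' hC
        rw [ba2, ba3] at hfar3'
        have hne3 : ctZ (sh.boxOf f (i + 1 + 1)) - ctZ (sh.boxOf f i) ≠ 0 := by omega
        have hz3 : ((ctZ (sh.boxOf f (i + 1 + 1)) : ℂ) - (ctZ (sh.boxOf f i) : ℂ)) ≠ 0 := by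
          have h := (Int.cast_ne_zero (α := ℂ)).mpr hne3
          push_cast at h
          exact h
        simp only [map_add, map_smul, hE1, hE2, hEA, hEA2, hEB, hEB2, hEC, hED,
          hv1, hv2, hv3, hv4, hv5, hv6, hss, hss2, hbr, smul_add, smul_smul]
        rw [aI_boxes sh f i, aI_boxes sh f (i + 1)]
        match_scalars <;> field_simp [hz1, hz2, hz3] <;> first | ring1 | tauto | (left; ring1) | (right; ring1)
      · -- Case 1b : C and D not standard
        have hD : sApply i (sApply (i + 1) f) ∉ sh.SYT := fun hd =>
          hC (hCiff.mpr (hDiff.mp hd))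
        have hC0 : sh.vOf (sApply (i + 1) (sApply i f)) = 0 := vOf_not_mem sh hC
        have hD0 : sh.vOf (sApply i (sApply (i + 1) f)) = 0 := vOf_not_mem sh hD
        have hpm3 := ct_pm_of_not_mem hA hj1 h2' hC
        rw [ba2, ba3] at hpm3
        have hne3 : ctZ (sh.boxOf f (i + 1 + 1)) - ctZ (sh.boxOf f i) ≠ 0 := by omega
        have hz3 : ((ctZ (sh.boxOf f (i + 1 + 1)) : ℂ) - (ctZ (sh.boxOf f i) : ℂ)) ≠ 0 := by
          have h := (Int.cast_ne_zero (α := ℂ)).mpr hne3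
          push_cast at h
          exact h
        simp only [map_add, map_smul, hE1, hE2, hEA, hEA2, hEB, hEB2,
          hv1, hv2, hv3, hv4, hv5, hv6, hss, hss2, hbr, hC0, hD0,
          smul_add, smul_smul, smul_zero, add_zero, zero_add, map_zero]
        rw [aI_boxes sh f i, aI_boxes sh f (i + 1)]
        match_scalars <;> field_simp [hz1, hz2, hz3] <;> first | ring1 | tauto | (left; ring1) | (right; ring1)
    · -- Case 2 : A standard, B not standard
      have hB0 : sh.vOf (sApply (i + 1) f) = 0 := vOf_not_mem sh hB
      have hpm2 := ct_pm_of_not_mem hf hj1 h2' hB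
      have hadj23 : BoxAdj (sh.boxOf f (i + 1)) (sh.boxOf f (i + 1 + 1)) :=
        adj_of_not_mem hf hj1 h2' hB
      by_cases hC : sApply (i + 1) (sApply i f) ∈ sh.SYT
      · -- Case 2a
        have hEC := semiOp_apply_vOf sh i hC
        have hE_not : sApply i (sApply (i + 1) (sApply i f)) ∉ sh.SYT := by
          apply sApply_not_mem_of_adj hC h1 hi2
          rw [bc1, bc2]
          exact hadj23
        have hE0 : sh.vOf (sApply i (sApply (i + 1) (sApply i f))) = 0 := vOf_not_mem sh hE_not
        have hfar3' := ct_far_of_mem hA hj1 h2' hC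
        rw [ba2, ba3] at hfar3'
        have hne3 : ctZ (sh.boxOf f (i + 1 + 1)) - ctZ (sh.boxOf f i) ≠ 0 := by omega
        have hz3 : ((ctZ (sh.boxOf f (i + 1 + 1)) : ℂ) - (ctZ (sh.boxOf f i) : ℂ)) ≠ 0 := by
          have h := (Int.cast_ne_zero (α := ℂ)).mpr hne3
          push_cast at h
          exact h
        simp only [map_add, map_smul, hE1, hE2, hEA, hEA2, hEC,
          hv1, hv2, hv3, hv4, hv5, hv6, hss, hss2, hbr, hB0, hE0,
          smul_add, smul_smul, smul_zero, add_zero, zero_add, map_zero]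
        rw [aI_boxes sh f i, aI_boxes sh f (i + 1)]
        rcases hpm2 with h3 | h3 <;>
        · rw [h3] at hz3 ⊢
          push_cast at hz3 ⊢
          match_scalars <;> field_simp [hz1, hz2, hz3] <;> first | ring1 | tauto | (left; ring1) | (right; ring1)
      · -- Case 2b
        have hC0 : sh.vOf (sApply (i + 1) (sApply i f)) = 0 := vOf_not_mem sh hC
        have hpm3 := ct_pm_of_not_mem hA hj1 h2' hC
        rw [ba2, ba3] at hpm3
        have hfar1' := hfar1
        have hcase : (ctZ (sh.boxOf f (i + 1)) = ctZ (sh.boxOf f i) - 2 ∧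
            ctZ (sh.boxOf f (i + 1 + 1)) = ctZ (sh.boxOf f i) - 1) ∨
            (ctZ (sh.boxOf f (i + 1)) = ctZ (sh.boxOf f i) + 2 ∧
            ctZ (sh.boxOf f (i + 1 + 1)) = ctZ (sh.boxOf f i) + 1) := by
          rcases hpm2 with h3 | h3 <;> rcases hpm3 with h4 | h4 <;> omega
        simp only [map_add, map_smul, hE1, hE2, hEA, hEA2,
          hv1, hv2, hv3, hv4, hv5, hv6, hss, hss2, hbr, hB0, hC0,
          smul_add, smul_smul, smul_zero, add_zero, zero_add, map_zero]
        rw [aI_boxes sh f i, aI_boxes sh f (i + 1)]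
        rcases hcase with ⟨h3, h4⟩ | ⟨h3, h4⟩ <;>
        · rw [h3, h4]
          push_cast
          match_scalars <;> norm_num
  · have hA0 : sh.vOf (sApply i f) = 0 := vOf_not_mem sh hA
    have hpm1 := ct_pm_of_not_mem hf h1 hi2 hA
    have hadj12 : BoxAdj (sh.boxOf f i) (sh.boxOf f (i + 1)) := adj_of_not_mem hf h1 hi2 hA
    by_cases hB : sApply (i + 1) f ∈ sh.SYT
    · -- Case 3 : A not standard, B standard
      have hEB := semiOp_apply_vOf sh i hB
      have hEB2 := semiOp_apply_vOf sh (i + 1) hB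
      have hfar2 := ct_far_of_mem hf hj1 h2' hB
      by_cases hD : sApply i (sApply (i + 1) f) ∈ sh.SYT
      · -- Case 3a
        have hED := semiOp_apply_vOf sh (i + 1) hD
        have hE_not : sApply (i + 1) (sApply i (sApply (i + 1) f)) ∉ sh.SYT := by
          apply sApply_not_mem_of_adj hD hj1 h2'
          rw [bd1, bd2]
          exact hadj12
        rw [hbr] at hE_not
        have hE0 : sh.vOf (sApply i (sApply (i + 1) (sApply i f))) = 0 :=
          vOf_not_mem sh hE_not
        have hfar3' := ct_far_of_mem hB h1 hi2 hD
        rw [bb1, bb2] at hfar3'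
        have hne3 : ctZ (sh.boxOf f (i + 1 + 1)) - ctZ (sh.boxOf f i) ≠ 0 := by omega
        have hz3 : ((ctZ (sh.boxOf f (i + 1 + 1)) : ℂ) - (ctZ (sh.boxOf f i) : ℂ)) ≠ 0 := by
          have h := (Int.cast_ne_zero (α := ℂ)).mpr hne3
          push_cast at h
          exact h
        simp only [map_add, map_smul, hE1, hE2, hEB, hEB2, hED,
          hv1, hv2, hv3, hv4, hv5, hv6, hss, hss2, hbr, hA0, hE0,
          smul_add, smul_smul, smul_zero, add_zero, zero_add, map_zero]
        rw [aI_boxes sh f i, aI_boxes sh f (i + 1)]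
        rcases hpm1 with h3 | h3 <;>
        · rw [h3] at hz1 hz2 ⊢
          push_cast at hz1 hz2 hz3 ⊢
          match_scalars <;> field_simp [hz1, hz2, hz3] <;>
            first | ring1 | tauto | (left; ring1) | (right; ring1) | (ring_nf; norm_num)
      · -- Case 3b
        have hD0 : sh.vOf (sApply i (sApply (i + 1) f)) = 0 := vOf_not_mem sh hD
        have hpm3 := ct_pm_of_not_mem hB h1 hi2 hD
        rw [bb1, bb2] at hpm3
        have hcase : (ctZ (sh.boxOf f (i + 1)) = ctZ (sh.boxOf f i) - 1 ∧
            ctZ (sh.boxOf f (i + 1 + 1)) = ctZ (sh.boxOf f i) + 1) ∨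
            (ctZ (sh.boxOf f (i + 1)) = ctZ (sh.boxOf f i) + 1 ∧
            ctZ (sh.boxOf f (i + 1 + 1)) = ctZ (sh.boxOf f i) - 1) := by
          rcases hpm1 with h3 | h3 <;> rcases hpm3 with h4 | h4 <;> omega
        simp only [map_add, map_smul, hE1, hE2, hEB, hEB2,
          hv1, hv2, hv3, hv4, hv5, hv6, hss, hss2, hbr, hA0, hD0,
          smul_add, smul_smul, smul_zero, add_zero, zero_add, map_zero]
        rw [aI_boxes sh f i, aI_boxes sh f (i + 1)]
        rcases hcase with ⟨h3, h4⟩ | ⟨h3, h4⟩ <;>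
        · rw [h3, h4]
          push_cast
          match_scalars <;> ring_nf <;> norm_num
    · -- Case 4 : A and B not standard
      have hA0' : sh.vOf (sApply i f) = 0 := vOf_not_mem sh hA
      have hB0 : sh.vOf (sApply (i + 1) f) = 0 := vOf_not_mem sh hB
      have hadj23 : BoxAdj (sh.boxOf f (i + 1)) (sh.boxOf f (i + 1 + 1)) :=
        adj_of_not_mem hf hj1 h2' hB
      have hmix := no_mixed hf h1 h2 hadj12 (by rw [show i + 2 = i + 1 + 1 from rfl]; exact hadj23)
      rw [show i + 2 = i + 1 + 1 from rfl] at hmix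
      simp only [map_add, map_smul, hE1, hE2, hA0', hB0,
        smul_add, smul_smul, smul_zero, add_zero, zero_add, map_zero]
      rw [aI_boxes sh f i, aI_boxes sh f (i + 1)]
      rcases hmix with ⟨h3, h4⟩ | ⟨h3, h4⟩ <;>
      · rw [h4, h3]
        push_cast
        match_scalars <;> norm_num

end SkewShape

/-! ### Lifting Coxeter-type relations to a homomorphism from the symmetric group -/

section PermLift

open Equiv

variable {G : Type*} [Group G]

/-- The type A Coxeter relations for a family of elements indexed by `0, …, n-2`. -/
def coxRel (n : ℕ) (t : ℕ → G) : Prop :=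
  (∀ k, k + 2 ≤ n → t k * t k = 1) ∧
  (∀ k, k + 3 ≤ n → t k * t (k + 1) * t k = t (k + 1) * t k * t (k + 1)) ∧
  (∀ k l, k + 2 ≤ l → l + 2 ≤ n → t k * t l = t l * t k)

/-- `dvec t a = t (a-1) * ⋯ * t 1 * t 0`. -/
def dvec (t : ℕ → G) : ℕ → G
  | 0 => 1
  | a + 1 => t a * dvec t a

lemma comm_dvec {n : ℕ} {t : ℕ → G} (h : coxRel n t) :
    ∀ a k, a + 1 ≤ k → k + 2 ≤ n → t k * dvec t a = dvec t a * t k := by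
  intro a
  induction a with
  | zero => intro k _ _; show t k * 1 = 1 * t k; rw [mul_one, one_mul]
  | succ a ih =>
    intro k hk hkn
    show t k * (t a * dvec t a) = t a * dvec t a * t k
    rw [← mul_assoc, ← h.2.2 a k (by omega) hkn, mul_assoc, ih k (by omega) hkn, mul_assoc]

lemma slide_dvec {n : ℕ} {t : ℕ → G} (h : coxRel n t) :
    ∀ a k, k + 2 ≤ a → a + 1 ≤ n → t k * dvec t a = dvec t a * t (k + 1) := by
  intro a
  induction a with
  | zero => intro k hk _; exact absurd hk (by omega)
  | succ a ih =>
    intro k hk hn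
    rcases Nat.lt_or_ge (k + 2) (a + 1) with hlt | hge
    · show t k * (t a * dvec t a) = t a * dvec t a * t (k + 1)
      rw [← mul_assoc, h.2.2 k a (by omega) (by omega), mul_assoc,
        ih k (by omega) (by omega), ← mul_assoc]
    · have ha : a = k + 1 := by omega
      subst ha
      show t k * (t (k + 1) * (t k * dvec t k)) = t (k + 1) * (t k * dvec t k) * t (k + 1)
      have hb := h.2.1 k (by omega)
      calc t k * (t (k + 1) * (t k * dvec t k))
          = t k * t (k + 1) * t k * dvec t k := by group
        _ = t (k + 1) * t k * t (k + 1) * dvec t k := by rw [hb]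
        _ = t (k + 1) * t k * (t (k + 1) * dvec t k) := by group
        _ = t (k + 1) * t k * (dvec t k * t (k + 1)) := by
              rw [comm_dvec h k (k + 1) (by omega) (by omega)]
        _ = t (k + 1) * (t k * dvec t k) * t (k + 1) := by group

lemma cancel_dvec {n : ℕ} {t : ℕ → G} (h : coxRel n t) (a : ℕ) (ha : a + 2 ≤ n) :
    t a * dvec t (a + 1) = dvec t a := by
  show t a * (t a * dvec t a) = dvec t a
  rw [← mul_assoc, h.1 a ha, one_mul]

/-- The adjacent transpositions in `Perm (Fin n)` (junk value `1` out of range). -/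
def sPerm (n : ℕ) (k : ℕ) : Equiv.Perm (Fin n) :=
  if h : k + 1 < n then Equiv.swap ⟨k, by omega⟩ ⟨k + 1, h⟩ else 1

lemma fin_mk_ne {n a b : ℕ} (ha : a < n) (hb : b < n) (h : a ≠ b) :
    (⟨a, ha⟩ : Fin n) ≠ ⟨b, hb⟩ := by
  simp only [ne_eq, Fin.mk.injEq]
  exact h

lemma swap_braid {α : Type*} [DecidableEq α] (x y z : α) (hxy : x ≠ y) (hyz : y ≠ z)
    (hxz : x ≠ z) :
    Equiv.swap x y * Equiv.swap y z * Equiv.swap x y =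
      Equiv.swap y z * Equiv.swap x y * Equiv.swap y z := by
  have L : Equiv.swap x y * Equiv.swap y z * Equiv.swap x y = Equiv.swap x z := by
    rw [Equiv.swap_comm x y, Equiv.swap_comm y z]
    exact Equiv.swap_mul_swap_mul_swap (Ne.symm hyz) (Ne.symm hxz)
  have R : Equiv.swap y z * Equiv.swap x y * Equiv.swap y z = Equiv.swap z x :=
    Equiv.swap_mul_swap_mul_swap hxy hxz
  rw [L, R, Equiv.swap_comm]

lemma swap_disj_comm {α : Type*} [DecidableEq α] {p q r s : α} (h1 : p ≠ r) (h2 : p ≠ s)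
    (h3 : q ≠ r) (h4 : q ≠ s) :
    Equiv.swap p q * Equiv.swap r s = Equiv.swap r s * Equiv.swap p q := by
  ext x
  simp only [Equiv.Perm.mul_apply]
  rcases eq_or_ne x p with rfl | hxp
  · rw [Equiv.swap_apply_of_ne_of_ne h1 h2, Equiv.swap_apply_left,
      Equiv.swap_apply_of_ne_of_ne h3 h4]
  rcases eq_or_ne x q with rfl | hxq
  · rw [Equiv.swap_apply_of_ne_of_ne h3 h4, Equiv.swap_apply_right,
      Equiv.swap_apply_of_ne_of_ne h1 h2]
  rcases eq_or_ne x r with rfl | hxr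
  · rw [Equiv.swap_apply_left, Equiv.swap_apply_of_ne_of_ne (Ne.symm h1) (Ne.symm h3),
      Equiv.swap_apply_of_ne_of_ne (Ne.symm h2) (Ne.symm h4), Equiv.swap_apply_left]
  rcases eq_or_ne x s with rfl | hxs
  · rw [Equiv.swap_apply_right, Equiv.swap_apply_of_ne_of_ne (Ne.symm h2) (Ne.symm h4),
      Equiv.swap_apply_of_ne_of_ne (Ne.symm h1) (Ne.symm h3), Equiv.swap_apply_right]
  · rw [Equiv.swap_apply_of_ne_of_ne hxr hxs, Equiv.swap_apply_of_ne_of_ne hxp hxq,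
      Equiv.swap_apply_of_ne_of_ne hxr hxs]

lemma sPerm_coxRel (n : ℕ) : coxRel n (sPerm n) := by
  refine ⟨?_, ?_, ?_⟩
  · intro k hk
    rw [sPerm, dif_pos (show k + 1 < n by omega)]
    exact Equiv.swap_mul_self _ _
  · intro k hk
    rw [sPerm, sPerm, dif_pos (show k + 1 < n by omega), dif_pos (show k + 1 + 1 < n by omega)]
    exact swap_braid _ _ _ (fin_mk_ne _ _ (by omega)) (fin_mk_ne _ _ (by omega))
      (fin_mk_ne _ _ (by omega))
  · intro k l hkl hln
    rw [sPerm, sPerm, dif_pos (show k + 1 < n by omega), dif_pos (show l + 1 < n by omega)]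
    exact swap_disj_comm (fin_mk_ne _ _ (by omega)) (fin_mk_ne _ _ (by omega))
      (fin_mk_ne _ _ (by omega)) (fin_mk_ne _ _ (by omega))

lemma dvec_sPerm_zero (n : ℕ) :
    ∀ a (ha : a ≤ n), dvec (sPerm (n + 1)) a 0 = ⟨a, Nat.lt_succ_of_le ha⟩ := by
  intro a
  induction a with
  | zero =>
    intro _
    apply Fin.ext
    simp [dvec]
  | succ a ih =>
    intro ha
    show (sPerm (n + 1) a * dvec (sPerm (n + 1)) a) 0 = _
    rw [Equiv.Perm.mul_apply, ih (by omega), sPerm, dif_pos (show a + 1 < n + 1 by omega)]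
    exact Equiv.swap_apply_left _ _

/-- The embedding `Perm (Fin n) →* Perm (Fin (n+1))` fixing `0` and shifting. -/
def embPerm (n : ℕ) : Equiv.Perm (Fin n) →* Equiv.Perm (Fin (n + 1)) where
  toFun e := Equiv.Perm.decomposeFin.symm (0, e)
  map_one' := by
    ext x
    cases x using Fin.cases with
    | zero => rw [Equiv.Perm.decomposeFin_symm_apply_zero]; rfl
    | succ y => rw [Equiv.Perm.decomposeFin_symm_apply_succ]; simp
  map_mul' e1 e2 := by
    ext x
    cases x using Fin.cases with
    | zero =>
      simp [Equiv.Perm.decomposeFin_symm_apply_zero, Equiv.Perm.mul_apply]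
    | succ y =>
      simp [Equiv.Perm.decomposeFin_symm_apply_succ, Equiv.Perm.mul_apply]

lemma embPerm_zero (n : ℕ) (e : Equiv.Perm (Fin n)) : embPerm n e 0 = 0 :=
  Equiv.Perm.decomposeFin_symm_apply_zero 0 e

lemma embPerm_succ (n : ℕ) (e : Equiv.Perm (Fin n)) (x : Fin n) :
    embPerm n e x.succ = (e x).succ := by
  show (Equiv.Perm.decomposeFin.symm (0, e)) x.succ = _
  rw [Equiv.Perm.decomposeFin_symm_apply_succ]
  simp

lemma embPerm_def (n : ℕ) (e : Equiv.Perm (Fin n)) :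
    embPerm n e = Equiv.Perm.decomposeFin.symm (0, e) := rfl

lemma embPerm_sPerm (n k : ℕ) (hk : k + 1 < n) :
    embPerm n (sPerm n k) = sPerm (n + 1) (k + 1) := by
  have hk' : k + 1 + 1 < n + 1 := by omega
  rw [sPerm, sPerm, dif_pos hk, dif_pos hk']
  ext x
  cases x using Fin.cases with
  | zero =>
    rw [embPerm_zero]
    have h1 : (0 : Fin (n + 1)) ≠ ⟨k + 1, by omega⟩ := by
      simp only [ne_eq, Fin.ext_iff, Fin.val_zero]
      omega
    have h2 : (0 : Fin (n + 1)) ≠ ⟨k + 1 + 1, hk'⟩ := by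
      simp only [ne_eq, Fin.ext_iff, Fin.val_zero]
      omega
    rw [Equiv.swap_apply_of_ne_of_ne h1 h2]
  | succ y =>
    rw [embPerm_succ]
    rcases eq_or_ne y ⟨k, by omega⟩ with rfl | hy1
    · rw [Equiv.swap_apply_left]
      have e1 : (⟨k, by omega⟩ : Fin n).succ = (⟨k + 1, by omega⟩ : Fin (n + 1)) := rfl
      rw [e1, Equiv.swap_apply_left]
      rfl
    rcases eq_or_ne y ⟨k + 1, hk⟩ with rfl | hy2
    · rw [Equiv.swap_apply_right]
      have e1 : (⟨k + 1, hk⟩ : Fin n).succ = (⟨k + 1 + 1, hk'⟩ : Fin (n + 1)) := rfl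
      rw [e1, Equiv.swap_apply_right]
      rfl
    · rw [Equiv.swap_apply_of_ne_of_ne hy1 hy2]
      have h1 : y.succ ≠ (⟨k + 1, by omega⟩ : Fin (n + 1)) := by
        simp only [ne_eq, Fin.ext_iff, Fin.val_succ] at hy1 ⊢
        omega
      have h2 : y.succ ≠ (⟨k + 1 + 1, hk'⟩ : Fin (n + 1)) := by
        simp only [ne_eq, Fin.ext_iff, Fin.val_succ] at hy2 ⊢
        omega
      rw [Equiv.swap_apply_of_ne_of_ne h1 h2]

lemma perm_decomp (n : ℕ) (w : Equiv.Perm (Fin (n + 1))) :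
    ∃ a, a ≤ n ∧ ∃ e, w = dvec (sPerm (n + 1)) a * embPerm n e := by
  have ha : (w 0).val ≤ n := by omega
  have h1 : dvec (sPerm (n + 1)) (w 0).val 0 = w 0 := by
    rw [dvec_sPerm_zero n _ ha]
  have h0 : ((dvec (sPerm (n + 1)) (w 0).val)⁻¹ * w) 0 = 0 := by
    have h2 := congrArg (⇑(dvec (sPerm (n + 1)) (w 0).val)⁻¹) h1
    rw [show ∀ (e : Equiv.Perm (Fin (n + 1))) x, e⁻¹ (e x) = x from fun e x => e.symm_apply_apply x] at h2
    rw [Equiv.Perm.mul_apply, ← h2]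
  set w' := (dvec (sPerm (n + 1)) (w 0).val)⁻¹ * w with hw'
  have hsy : Equiv.Perm.decomposeFin.symm (Equiv.Perm.decomposeFin w') = w' :=
    Equiv.symm_apply_apply _ _
  have hfst : (Equiv.Perm.decomposeFin w').1 = 0 := by
    have happ : Equiv.Perm.decomposeFin.symm
        ((Equiv.Perm.decomposeFin w').1, (Equiv.Perm.decomposeFin w').2) 0 =
        (Equiv.Perm.decomposeFin w').1 :=
      Equiv.Perm.decomposeFin_symm_apply_zero _ _
    rw [← happ]
    have h2 : Equiv.Perm.decomposeFin.symm
        ((Equiv.Perm.decomposeFin w').1, (Equiv.Perm.decomposeFin w').2) = w' := hsy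
    rw [h2, h0]
  have hw'' : w' = embPerm n (Equiv.Perm.decomposeFin w').2 := by
    have h2 : embPerm n (Equiv.Perm.decomposeFin w').2 =
        Equiv.Perm.decomposeFin.symm (0, (Equiv.Perm.decomposeFin w').2) := rfl
    rw [h2, ← hfst]
    exact hsy.symm
  exact ⟨(w 0).val, ha, (Equiv.Perm.decomposeFin w').2,
    by rw [← hw'', hw', mul_inv_cancel_left]⟩

lemma fin_isLt_succ {n : ℕ} (x : Fin (n + 1)) : x.val ≤ n := by omega

end PermLift

section PermLift2

open Equiv

variable {G : Type*} [Group G]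

/-- Candidate lift of the symmetric group to `G`. -/
noncomputable def liftFun (n : ℕ) (t : ℕ → G) (ρ' : Equiv.Perm (Fin n) →* G)
    (w : Equiv.Perm (Fin (n + 1))) : G :=
  dvec t (w 0).val *
    ρ' ((Equiv.Perm.decomposeFin ((dvec (sPerm (n + 1)) (w 0).val)⁻¹ * w)).2)

lemma liftFun_eq (n : ℕ) (t : ℕ → G) (ρ' : Equiv.Perm (Fin n) →* G)
    (w : Equiv.Perm (Fin (n + 1))) (a : ℕ) (ha : a ≤ n) (e : Equiv.Perm (Fin n))
    (hw : w = dvec (sPerm (n + 1)) a * embPerm n e) :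
    liftFun n t ρ' w = dvec t a * ρ' e := by
  have hw0 : w 0 = ⟨a, Nat.lt_succ_of_le ha⟩ := by
    rw [hw, Equiv.Perm.mul_apply, embPerm_zero, dvec_sPerm_zero n a ha]
  have hval : (w 0).val = a := by rw [hw0]
  have hinv : (dvec (sPerm (n + 1)) (w 0).val)⁻¹ * w = embPerm n e := by
    rw [hval, hw, inv_mul_cancel_left]
  show dvec t (w 0).val *
      ρ' ((Equiv.Perm.decomposeFin ((dvec (sPerm (n + 1)) (w 0).val)⁻¹ * w)).2) = _
  rw [hinv, hval]
  congr 1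

lemma liftFun_step (n : ℕ) (t : ℕ → G) (ρ' : Equiv.Perm (Fin n) →* G)
    (ht : coxRel (n + 1) t)
    (hρ' : ∀ (k : ℕ) (hk : k + 1 < n),
      ρ' (Equiv.swap ⟨k, Nat.lt_of_succ_lt hk⟩ ⟨k + 1, hk⟩) = t (k + 1)) :
    ∀ (k : ℕ), k + 1 < n + 1 → ∀ w : Equiv.Perm (Fin (n + 1)),
      liftFun n t ρ' (sPerm (n + 1) k * w) = t k * liftFun n t ρ' w := by
  intro k hk w
  obtain ⟨a, ha, e, hw⟩ := perm_decomp n w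
  have hFw : liftFun n t ρ' w = dvec t a * ρ' e := liftFun_eq n t ρ' w a ha e hw
  have hρs : ∀ (m : ℕ), m + 1 < n → ρ' (sPerm n m) = t (m + 1) := by
    intro m hm
    rw [sPerm, dif_pos hm]
    exact hρ' m hm
  rcases lt_trichotomy k a with hka | hka | hka
  · rcases Nat.lt_or_ge (k + 2) a with hk2 | hk2
    · -- k + 2 < a : slide (also covers k + 2 = a below via hge)
      have ha2 : k + 2 ≤ a := by omega
      have hkn : k + 1 < n := by omega
      have hs_slide : sPerm (n + 1) k * dvec (sPerm (n + 1)) a =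
          dvec (sPerm (n + 1)) a * sPerm (n + 1) (k + 1) :=
        slide_dvec (sPerm_coxRel (n + 1)) a k ha2 (by omega)
      have ht_slide : t k * dvec t a = dvec t a * t (k + 1) :=
        slide_dvec ht a k ha2 (by omega)
      have hw' : sPerm (n + 1) k * w =
          dvec (sPerm (n + 1)) a * embPerm n (sPerm n k * e) := by
        rw [hw, ← mul_assoc, hs_slide, mul_assoc, map_mul, embPerm_sPerm n k hkn]
      rw [liftFun_eq n t ρ' _ a ha _ hw', hFw, map_mul, hρs k hkn, ← mul_assoc,
        ← ht_slide, mul_assoc]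
    · rcases Nat.eq_or_lt_of_le hk2 with heq | hlt
      · -- k + 2 = a : still slide
        have ha2 : k + 2 ≤ a := by omega
        have hkn : k + 1 < n := by omega
        have hs_slide : sPerm (n + 1) k * dvec (sPerm (n + 1)) a =
            dvec (sPerm (n + 1)) a * sPerm (n + 1) (k + 1) :=
          slide_dvec (sPerm_coxRel (n + 1)) a k ha2 (by omega)
        have ht_slide : t k * dvec t a = dvec t a * t (k + 1) :=
          slide_dvec ht a k ha2 (by omega)
        have hw' : sPerm (n + 1) k * w =
            dvec (sPerm (n + 1)) a * embPerm n (sPerm n k * e) := by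
          rw [hw, ← mul_assoc, hs_slide, mul_assoc, map_mul, embPerm_sPerm n k hkn]
        rw [liftFun_eq n t ρ' _ a ha _ hw', hFw, map_mul, hρs k hkn, ← mul_assoc,
          ← ht_slide, mul_assoc]
      · -- k = a - 1
        have hak : a = k + 1 := by omega
        subst hak
        have hs_c : sPerm (n + 1) k * dvec (sPerm (n + 1)) (k + 1) = dvec (sPerm (n + 1)) k :=
          cancel_dvec (sPerm_coxRel (n + 1)) k (by omega)
        have ht_c : t k * dvec t (k + 1) = dvec t k := cancel_dvec ht k (by omega)
        have hw' : sPerm (n + 1) k * w = dvec (sPerm (n + 1)) k * embPerm n e := by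
          rw [hw, ← mul_assoc, hs_c]
        rw [liftFun_eq n t ρ' _ k (by omega) e hw', hFw, ← mul_assoc, ht_c]
  · -- k = a
    subst hka
    have hd : dvec (sPerm (n + 1)) (k + 1) = sPerm (n + 1) k * dvec (sPerm (n + 1)) k := rfl
    have hw' : sPerm (n + 1) k * w = dvec (sPerm (n + 1)) (k + 1) * embPerm n e := by
      rw [hw, ← mul_assoc, ← hd]
    rw [liftFun_eq n t ρ' _ (k + 1) (by omega) e hw', hFw]
    have hd' : dvec t (k + 1) = t k * dvec t k := rfl
    rw [hd', mul_assoc]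
  · -- k > a : commute
    obtain ⟨m, rfl⟩ : ∃ m, k = m + 1 := ⟨k - 1, by omega⟩
    have hka' : a + 1 ≤ m + 1 := by omega
    have hcomm_s : sPerm (n + 1) (m + 1) * dvec (sPerm (n + 1)) a =
        dvec (sPerm (n + 1)) a * sPerm (n + 1) (m + 1) :=
      comm_dvec (sPerm_coxRel (n + 1)) a (m + 1) hka' (by omega)
    have hcomm_t : t (m + 1) * dvec t a = dvec t a * t (m + 1) :=
      comm_dvec ht a (m + 1) hka' (by omega)
    have hw' : sPerm (n + 1) (m + 1) * w =
        dvec (sPerm (n + 1)) a * embPerm n (sPerm n m * e) := by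
      rw [hw, ← mul_assoc, hcomm_s, mul_assoc, map_mul, embPerm_sPerm n m (by omega)]
    rw [liftFun_eq n t ρ' _ a ha _ hw', hFw, map_mul, hρs m (by omega), ← mul_assoc,
      ← hcomm_t, mul_assoc]

lemma gen_adj : ∀ (n : ℕ) (w : Equiv.Perm (Fin n)),
    w ∈ Subgroup.closure {σ : Equiv.Perm (Fin n) | ∃ k, k + 1 < n ∧ σ = sPerm n k} := by
  intro n
  induction n with
  | zero =>
    intro w
    have : w = 1 := Subsingleton.elim _ _
    rw [this]
    exact Subgroup.one_mem _
  | succ n ih =>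
    intro w
    obtain ⟨a, ha, e, rfl⟩ := perm_decomp n w
    apply Subgroup.mul_mem
    · have hdv : ∀ b, b ≤ n → dvec (sPerm (n + 1)) b ∈
          Subgroup.closure {σ : Equiv.Perm (Fin (n + 1)) | ∃ k, k + 1 < n + 1 ∧ σ = sPerm (n + 1) k} := by
        intro b
        induction b with
        | zero => intro _; exact Subgroup.one_mem _
        | succ b ihb =>
          intro hb
          exact Subgroup.mul_mem _ (Subgroup.subset_closure ⟨b, by omega, rfl⟩) (ihb (by omega))
      exact hdv a ha
    · have hsub := ih e
      have hmem : embPerm n e ∈ Subgroup.map (embPerm n)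
          (Subgroup.closure {σ : Equiv.Perm (Fin n) | ∃ k, k + 1 < n ∧ σ = sPerm n k}) :=
        ⟨e, hsub, rfl⟩
      rw [MonoidHom.map_closure] at hmem
      refine Subgroup.closure_mono ?_ hmem
      rintro σ ⟨τ, ⟨k, hkn, rfl⟩, rfl⟩
      exact ⟨k + 1, by omega, embPerm_sPerm n k hkn⟩

theorem perm_lift : ∀ (n : ℕ) {G : Type*} [Group G] (t : ℕ → G), coxRel n t →
    ∃ ρ : Equiv.Perm (Fin n) →* G, ∀ (k : ℕ) (hk : k + 1 < n),
      ρ (Equiv.swap ⟨k, Nat.lt_of_succ_lt hk⟩ ⟨k + 1, hk⟩) = t k := by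
  intro n
  induction n with
  | zero =>
    intro G _ t _
    exact ⟨1, fun k hk => absurd hk (by omega)⟩
  | succ n ih =>
    intro G _ t ht
    have ht' : coxRel n (fun k => t (k + 1)) :=
      ⟨fun k hk => ht.1 (k + 1) (by omega), fun k hk => ht.2.1 (k + 1) (by omega),
        fun k l hkl hln => ht.2.2 (k + 1) (l + 1) (by omega) (by omega)⟩
    obtain ⟨ρ', hρ'⟩ := ih (fun k => t (k + 1)) ht'
    have hStep := liftFun_step n t ρ' ht hρ'
    have hF1 : liftFun n t ρ' 1 = 1 := by
      have hdec : (1 : Equiv.Perm (Fin (n + 1))) = dvec (sPerm (n + 1)) 0 * embPerm n 1 := by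
        rw [map_one]
        show (1 : Equiv.Perm (Fin (n + 1))) = 1 * 1
        rw [mul_one]
      rw [liftFun_eq n t ρ' 1 0 (by omega) 1 hdec, map_one]
      show (1 : G) * 1 = 1
      rw [mul_one]
    have hFs : ∀ (k : ℕ), k + 1 < n + 1 → liftFun n t ρ' (sPerm (n + 1) k) = t k := by
      intro k hk
      have := hStep k hk 1
      rwa [mul_one, hF1, mul_one] at this
    have hmul : ∀ v w, liftFun n t ρ' (v * w) = liftFun n t ρ' v * liftFun n t ρ' w := by
      have key : ∀ v, v ∈ Subgroup.closure
          {σ : Equiv.Perm (Fin (n + 1)) | ∃ k, k + 1 < n + 1 ∧ σ = sPerm (n + 1) k} →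
          ∀ w, liftFun n t ρ' (v * w) = liftFun n t ρ' v * liftFun n t ρ' w := by
        intro v hv
        induction hv using Subgroup.closure_induction with
        | mem x hx =>
          obtain ⟨k, hk, rfl⟩ := hx
          intro w
          rw [hStep k hk w, hFs k hk]
        | one =>
          intro w
          rw [one_mul, hF1, one_mul]
        | mul x y hx hy ihx ihy =>
          intro w
          rw [mul_assoc, ihx (y * w), ihy w, ihx y, mul_assoc]
        | inv x hx ihx =>
          intro w
          have h1 := ihx x⁻¹
          rw [mul_inv_cancel, hF1] at h1
          have hxinv : liftFun n t ρ' x⁻¹ = (liftFun n t ρ' x)⁻¹ :=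
            ((inv_eq_of_mul_eq_one_right h1.symm)).symm
          have h2 := ihx (x⁻¹ * w)
          rw [← mul_assoc, mul_inv_cancel, one_mul] at h2
          rw [hxinv, h2, ← mul_assoc, inv_mul_cancel, one_mul]
      intro v w
      exact key v (gen_adj (n + 1) v) w
    refine ⟨MonoidHom.mk' (liftFun n t ρ') hmul, ?_⟩
    intro k hk
    have hsk : Equiv.swap (⟨k, Nat.lt_of_succ_lt hk⟩ : Fin (n + 1)) ⟨k + 1, hk⟩ =
        sPerm (n + 1) k := by
      rw [sPerm, dif_pos hk]
    show liftFun n t ρ' _ = t k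
    rw [hsk]
    exact hFs k hk

end PermLift2

namespace SkewShape

/-- The seminormal operator `σ_{k+1}` as a unit (junk value `1` out of range). -/
noncomputable def semiUnit (sh : SkewShape) (k : ℕ) : (Module.End ℂ (sh.SYTt →₀ ℂ))ˣ :=
  if h : k + 2 ≤ sh.nb then
    { val := sh.semiOp (k + 1)
      inv := sh.semiOp (k + 1)
      val_inv := by
        rw [Module.End.mul_eq_comp, rel_sq sh (k + 1) (by omega) (by omega)]
        rfl
      inv_val := by
        rw [Module.End.mul_eq_comp, rel_sq sh (k + 1) (by omega) (by omega)]
        rfl }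
  else 1

lemma semiUnit_coxRel (sh : SkewShape) : coxRel sh.nb sh.semiUnit := by
  refine ⟨?_, ?_, ?_⟩
  · intro k hk
    apply Units.ext
    rw [Units.val_mul]
    simp only [semiUnit, dif_pos hk]
    show sh.semiOp (k + 1) * sh.semiOp (k + 1) = 1
    rw [Module.End.mul_eq_comp, rel_sq sh (k + 1) (by omega) (by omega)]
    rfl
  · intro k hk
    apply Units.ext
    rw [Units.val_mul, Units.val_mul, Units.val_mul, Units.val_mul]
    simp only [semiUnit, dif_pos (show k + 2 ≤ sh.nb by omega),
      dif_pos (show k + 1 + 2 ≤ sh.nb by omega)]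
    show sh.semiOp (k + 1) * sh.semiOp (k + 1 + 1) * sh.semiOp (k + 1) =
      sh.semiOp (k + 1 + 1) * sh.semiOp (k + 1) * sh.semiOp (k + 1 + 1)
    rw [mul_assoc, mul_assoc, Module.End.mul_eq_comp, Module.End.mul_eq_comp,
      Module.End.mul_eq_comp, Module.End.mul_eq_comp,
      rel_braid sh (k + 1) (by omega) (by omega)]
  · intro k l hkl hln
    apply Units.ext
    rw [Units.val_mul, Units.val_mul]
    simp only [semiUnit, dif_pos (show k + 2 ≤ sh.nb by omega), dif_pos hln]
    show sh.semiOp (k + 1) * sh.semiOp (l + 1) = sh.semiOp (l + 1) * sh.semiOp (k + 1)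
    rw [Module.End.mul_eq_comp, Module.End.mul_eq_comp,
      rel_comm sh (k + 1) (l + 1) (by omega) (by omega) (by omega) (by omega)
        (Or.inl (by omega))]

end SkewShape

end AuxDev
/-- **Theorem (Young's seminormal representation).**
The seminormal operators `σ_1, …, σ_{n-1}` satisfy the defining relations of the
symmetric group `S_n`: commutation for `|i - j| > 1`, the braid relations, and
`σ_i² = id`.  Consequently `s_i ↦ σ_i` extends to a `ℂ`-linear representation of `S_n`
(realized as `Equiv.Perm (Fin n)`, where the simple transposition exchanging the
entries `k+1` and `k+2` is sent to `σ_{k+1}`). -/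
theorem seminormal_relations (sh : SkewShape) :
    (∀ i j : ℕ, 1 ≤ i → i + 1 ≤ sh.nb → 1 ≤ j → j + 1 ≤ sh.nb → (i + 1 < j ∨ j + 1 < i) →
        sh.semiOp i ∘ₗ sh.semiOp j = sh.semiOp j ∘ₗ sh.semiOp i) ∧
    (∀ i : ℕ, 1 ≤ i → i + 2 ≤ sh.nb →
        sh.semiOp i ∘ₗ sh.semiOp (i + 1) ∘ₗ sh.semiOp i =
          sh.semiOp (i + 1) ∘ₗ sh.semiOp i ∘ₗ sh.semiOp (i + 1)) ∧
    (∀ i : ℕ, 1 ≤ i → i + 1 ≤ sh.nb → sh.semiOp i ∘ₗ sh.semiOp i = LinearMap.id) ∧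
    (∃ ρ : Equiv.Perm (Fin sh.nb) →* (Module.End ℂ (sh.SYTt →₀ ℂ))ˣ,
      ∀ (k : ℕ) (hk : k + 1 < sh.nb),
        ((ρ (Equiv.swap ⟨k, Nat.lt_of_succ_lt hk⟩ ⟨k + 1, hk⟩) :
            (Module.End ℂ (sh.SYTt →₀ ℂ))ˣ) : Module.End ℂ (sh.SYTt →₀ ℂ)) =
          sh.semiOp (k + 1)) := by
  refine ⟨fun i j hi1 hi2 hj1 hj2 hij => SkewShape.rel_comm sh i j hi1 hi2 hj1 hj2 hij,
    fun i h1 h2 => SkewShape.rel_braid sh i h1 h2,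
    fun i h1 h2 => SkewShape.rel_sq sh i h1 h2, ?_⟩
  obtain ⟨ρ, hρ⟩ := perm_lift sh.nb sh.semiUnit (SkewShape.semiUnit_coxRel sh)
  refine ⟨ρ, fun k hk => ?_⟩
  rw [hρ k hk]
  simp only [SkewShape.semiUnit, dif_pos (show k + 2 ≤ sh.nb by omega)]
end

section
/- Let λ/μ be a skew shape with n boxes, T ∈ SYT(λ/μ), and 1 ≤ i ≤ n−1. Suppose s_i(T) is standard and (i+1, i) ∈ inv(T). Then inv(T) = s_i(inv(s_i(T))) ∪ {(i+1, i)}, where s_i acts on a pair of entries by exchanging i and i+1 in each coordinate and fixing all other values. -/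
open scoped Classical

namespace SkewShape

/-- The set of inversions of a tableau: pairs `(i, j)` with `i > j` such that `i` lies
strictly south and strictly west of `j`. -/
noncomputable def invSet (sh : SkewShape) (f : (ℕ × ℕ) → ℕ) : Finset (ℕ × ℕ) :=
  (Finset.Icc 1 sh.nb ×ˢ Finset.Icc 1 sh.nb).filter fun p =>
    p.2 < p.1 ∧ (sh.boxOf f p.2).1 < (sh.boxOf f p.1).1 ∧ (sh.boxOf f p.1).2 < (sh.boxOf f p.2).2

end SkewShape

namespace SkewShape

lemma boxOf_spec (sh : SkewShape) {f : (ℕ × ℕ) → ℕ} (hf : f ∈ sh.SYT) {k : ℕ}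
    (hk : k ∈ Finset.Icc 1 sh.nb) :
    sh.boxOf f k ∈ (↑sh.cells : Set (ℕ × ℕ)) ∧ f (sh.boxOf f k) = k := by
  have hex : ∃ a ∈ (↑sh.cells : Set (ℕ × ℕ)), f a = k := by
    obtain ⟨b, hb, hfb⟩ := hf.1.1.2.2 (by exact_mod_cast hk)
    exact ⟨b, hb, hfb⟩
  exact ⟨Function.invFunOn_mem hex, Function.invFunOn_eq hex⟩

end SkewShape

private lemma swap_lt_swap {i a b : ℕ} (h1 : b < a) (h2 : ¬(a = i + 1 ∧ b = i)) :
    Equiv.swap i (i + 1) b < Equiv.swap i (i + 1) a := by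
  rw [Equiv.swap_apply_def, Equiv.swap_apply_def]
  split_ifs <;> omega

/-- **Lemma (inversion swapping).**
If `T ∈ SYT(λ/μ)`, `s_i(T)` is standard, and `(i+1, i) ∈ inv(T)`, then
`inv(T) = s_i(inv(s_i(T))) ∪ {(i+1, i)}`, where `s_i` acts on a pair of entries by
exchanging `i` and `i+1` in each coordinate and fixing all other values. -/
theorem inversion_swapping
    (sh : SkewShape) (T : (ℕ × ℕ) → ℕ) (hT : T ∈ sh.SYT) (i : ℕ)
    (hstd : sApply i T ∈ sh.SYT) (hinv : (i + 1, i) ∈ sh.invSet T) :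
    sh.invSet T =
      (sh.invSet (sApply i T)).image
          (fun p => (Equiv.swap i (i + 1) p.1, Equiv.swap i (i + 1) p.2)) ∪
        {(i + 1, i)} := by
  classical
  have hmem0 := Finset.mem_filter.mp hinv
  have hprod := Finset.mem_product.mp hmem0.1
  have hi1 : 1 ≤ i := (Finset.mem_Icc.mp hprod.2).1
  have hin : i + 1 ≤ sh.nb := (Finset.mem_Icc.mp hprod.1).2
  have hswapIcc : ∀ k ∈ Finset.Icc 1 sh.nb, Equiv.swap i (i + 1) k ∈ Finset.Icc 1 sh.nb := by
    intro k hk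
    rw [Finset.mem_Icc] at *
    rw [Equiv.swap_apply_def]
    split_ifs <;> omega
  have hbS : ∀ k ∈ Finset.Icc 1 sh.nb,
      sh.boxOf (sApply i T) k = sh.boxOf T (Equiv.swap i (i + 1) k) := by
    intro k hk
    obtain ⟨hm1, he1⟩ := sh.boxOf_spec hstd hk
    obtain ⟨hm2, he2⟩ := sh.boxOf_spec hT (hswapIcc k hk)
    apply hstd.1.1.2.1 hm1 hm2
    rw [he1]
    show k = Equiv.swap i (i + 1) (T (sh.boxOf T (Equiv.swap i (i + 1) k)))
    rw [he2, Equiv.swap_apply_self]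
  ext ⟨a, b⟩
  simp only [Finset.mem_union, Finset.mem_image, Finset.mem_singleton, Prod.mk.injEq]
  constructor
  · intro h
    rw [SkewShape.invSet, Finset.mem_filter, Finset.mem_product] at h
    obtain ⟨⟨haI, hbI⟩, hba, hrow, hcol⟩ := h
    by_cases hc : a = i + 1 ∧ b = i
    · exact Or.inr hc
    · refine Or.inl ⟨(Equiv.swap i (i + 1) a, Equiv.swap i (i + 1) b), ?_, ?_⟩
      · rw [SkewShape.invSet, Finset.mem_filter, Finset.mem_product]
        refine ⟨⟨hswapIcc a haI, hswapIcc b hbI⟩, swap_lt_swap hba hc, ?_, ?_⟩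
        · rw [hbS _ (hswapIcc b hbI), hbS _ (hswapIcc a haI),
            Equiv.swap_apply_self, Equiv.swap_apply_self]
          exact hrow
        · rw [hbS _ (hswapIcc b hbI), hbS _ (hswapIcc a haI),
            Equiv.swap_apply_self, Equiv.swap_apply_self]
          exact hcol
      · exact ⟨Equiv.swap_apply_self _ _ _, Equiv.swap_apply_self _ _ _⟩
  · rintro (⟨⟨q1, q2⟩, hq, heq1, heq2⟩ | ⟨rfl, rfl⟩)
    · rw [SkewShape.invSet, Finset.mem_filter, Finset.mem_product] at hq
      obtain ⟨⟨h1I, h2I⟩, hq21, hrow, hcol⟩ := hq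
      rw [hbS _ h2I, hbS _ h1I] at hrow hcol
      have hne : ¬(q1 = i + 1 ∧ q2 = i) := by
        rintro ⟨rfl, rfl⟩
        rw [Equiv.swap_apply_left, Equiv.swap_apply_right] at hrow
        exact absurd hrow (not_lt.mpr (le_of_lt hmem0.2.2.1))
      subst heq1
      subst heq2
      rw [SkewShape.invSet, Finset.mem_filter, Finset.mem_product]
      exact ⟨⟨hswapIcc q1 h1I, hswapIcc q2 h2I⟩, swap_lt_swap hq21 hne, hrow, hcol⟩
    · exact hinv
end

section
/- Let λ/μ be a skew shape with n boxes and T ∈ SYT(λ/μ). A pair (i,j) with 1 ≤ j < i ≤ n is an inversion of the tableau T if and only if it is an inversion of the permutation w_T, i.e., w_T^{-1}(i) < w_T^{-1}(j). Consequently, the number of inversions of T equals the Coxeter length ℓ(w_T). -/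
open scoped Classical

namespace InvAux

/-! ### Geometry of skew shapes and standard tableaux -/

lemma mem_cells {sh : SkewShape} {b : ℕ × ℕ} :
    b ∈ sh.cells ↔ b ∈ sh.lam ∧ b ∉ sh.mu := by
  simp [SkewShape.cells, Finset.mem_sdiff, YoungDiagram.mem_cells]

lemma cell_between {sh : SkewShape} {r c r' c' r'' c'' : ℕ}
    (h1 : (r, c) ∈ sh.cells) (h2 : (r', c') ∈ sh.cells)
    (ha : r ≤ r'') (hb : r'' ≤ r') (hc : c ≤ c'') (hd : c'' ≤ c') :
    (r'', c'') ∈ sh.cells := by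
  rw [mem_cells] at h1 h2 ⊢
  exact ⟨sh.lam.up_left_mem hb hd h2.1, fun hm => h1.2 (sh.mu.up_left_mem ha hc hm)⟩

lemma chain_col {sh : SkewShape} {T : (ℕ × ℕ) → ℕ} (hT : sh.IsRowColStrict T) :
    ∀ d r c, (r, c) ∈ sh.cells → (r + d + 1, c) ∈ sh.cells → T (r, c) < T (r + d + 1, c) := by
  intro d
  induction d with
  | zero => intro r c h1 h2; exact hT.2 r c h1 h2
  | succ d ih =>
      intro r c h1 h2
      have hmid : (r + 1, c) ∈ sh.cells :=
        cell_between h1 h2 (by omega) (by omega) le_rfl le_rfl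
      have h2' : (r + 1 + d + 1, c) ∈ sh.cells := by
        have : r + 1 + d + 1 = r + (d + 1) + 1 := by omega
        rw [this]; exact h2
      have := ih (r + 1) c hmid h2'
      have h' : r + 1 + d + 1 = r + (d + 1) + 1 := by omega
      rw [h'] at this
      exact (hT.2 r c h1 hmid).trans this

lemma chain_row {sh : SkewShape} {T : (ℕ × ℕ) → ℕ} (hT : sh.IsRowColStrict T) :
    ∀ d r c, (r, c) ∈ sh.cells → (r, c + d + 1) ∈ sh.cells → T (r, c) < T (r, c + d + 1) := by
  intro d
  induction d with
  | zero => intro r c h1 h2; exact hT.1 r c h1 h2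
  | succ d ih =>
      intro r c h1 h2
      have hmid : (r, c + 1) ∈ sh.cells :=
        cell_between h1 h2 le_rfl le_rfl (by omega) (by omega)
      have h2' : (r, c + 1 + d + 1) ∈ sh.cells := by
        have : c + 1 + d + 1 = c + (d + 1) + 1 := by omega
        rw [this]; exact h2
      have := ih r (c + 1) hmid h2'
      have h' : c + 1 + d + 1 = c + (d + 1) + 1 := by omega
      rw [h'] at this
      exact (hT.1 r c h1 hmid).trans this

lemma lt_of_north {sh : SkewShape} {T : (ℕ × ℕ) → ℕ} (hT : sh.IsRowColStrict T)
    {b b' : ℕ × ℕ} (h1 : b ∈ sh.cells) (h2 : b' ∈ sh.cells)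
    (hr : b.1 < b'.1) (hc : b.2 = b'.2) : T b < T b' := by
  obtain ⟨r, c⟩ := b; obtain ⟨r', c'⟩ := b'
  simp only at hr hc
  subst hc
  obtain ⟨d, rfl⟩ : ∃ d, r' = r + d + 1 := ⟨r' - r - 1, by omega⟩
  exact chain_col hT d r c h1 h2

lemma lt_of_nw {sh : SkewShape} {T : (ℕ × ℕ) → ℕ} (hT : sh.IsRowColStrict T)
    {b b' : ℕ × ℕ} (h1 : b ∈ sh.cells) (h2 : b' ∈ sh.cells)
    (hr : b.1 ≤ b'.1) (hc : b.2 < b'.2) : T b < T b' := by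
  obtain ⟨r, c⟩ := b; obtain ⟨r', c'⟩ := b'
  simp only at hr hc
  have hmid : (r, c') ∈ sh.cells := cell_between h1 h2 le_rfl hr (le_of_lt hc) le_rfl
  obtain ⟨d, rfl⟩ : ∃ d, c' = c + d + 1 := ⟨c' - c - 1, by omega⟩
  have t1 : T (r, c) < T (r, c + d + 1) := chain_row hT d r c h1 hmid
  rcases eq_or_lt_of_le hr with h | h
  · subst h; exact t1
  · exact t1.trans (lt_of_north hT hmid h2 h rfl)

/-! ### The column reading word -/

lemma colLt_trans {a b c : ℕ × ℕ} (h1 : colLt a b) (h2 : colLt b c) : colLt a c := by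
  simp only [colLt] at *; omega

lemma colLt_irrefl (a : ℕ × ℕ) : ¬ colLt a a := by simp [colLt]

lemma colLt_trichotomy (a b : ℕ × ℕ) : colLt a b ∨ a = b ∨ colLt b a := by
  obtain ⟨x, y⟩ := a; obtain ⟨x', y'⟩ := b
  simp only [colLt, Prod.mk.injEq]
  omega

lemma colReading_lt {sh : SkewShape} {b b' : ℕ × ℕ} (h : b ∈ sh.cells) (h' : b' ∈ sh.cells)
    (hlt : colLt b b') : sh.colReading b < sh.colReading b' := by
  unfold SkewShape.colReading
  rw [if_pos h, if_pos h']
  have hsub : sh.cells.filter (fun x => colLt x b) ⊂ sh.cells.filter (fun x => colLt x b') := by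
    constructor
    · intro x hx
      simp only [Finset.mem_filter] at hx ⊢
      exact ⟨hx.1, colLt_trans hx.2 hlt⟩
    · intro hcon
      have hb : b ∈ sh.cells.filter (fun x => colLt x b') := by
        simp only [Finset.mem_filter]; exact ⟨h, hlt⟩
      have := hcon hb
      simp only [Finset.mem_filter] at this
      exact colLt_irrefl b this.2
  have := Finset.card_lt_card hsub
  omega

lemma colReading_lt_iff {sh : SkewShape} {b b' : ℕ × ℕ} (h : b ∈ sh.cells) (h' : b' ∈ sh.cells) :
    sh.colReading b < sh.colReading b' ↔ colLt b b' := by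
  constructor
  · intro hlt
    rcases colLt_trichotomy b b' with h1 | rfl | h1
    · exact h1
    · omega
    · exact absurd (colReading_lt h' h h1) (by omega)
  · exact colReading_lt h h'

lemma boxOf_spec {sh : SkewShape} {f : (ℕ × ℕ) → ℕ}
    (hf : Set.SurjOn f (↑sh.cells) (↑(Finset.Icc 1 sh.nb)))
    {i : ℕ} (hi : i ∈ Finset.Icc 1 sh.nb) :
    sh.boxOf f i ∈ sh.cells ∧ f (sh.boxOf f i) = i := by
  have h : ∃ b ∈ (↑sh.cells : Set (ℕ × ℕ)), f b = i := hf (by exact_mod_cast hi)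
  exact ⟨by exact_mod_cast Function.invFunOn_mem h, Function.invFunOn_eq h⟩

/-! ### Inversions of permutations -/

/-- The set of inversions of `w` inside `{1, …, n}`. -/
noncomputable def Inv (n : ℕ) (w : Equiv.Perm ℕ) : Finset (ℕ × ℕ) :=
  (Finset.Icc 1 n ×ˢ Finset.Icc 1 n).filter fun p => p.1 < p.2 ∧ w p.2 < w p.1

/-- `w` fixes everything outside `{1, …, n}`. -/
def FixOut (n : ℕ) (w : Equiv.Perm ℕ) : Prop := ∀ m, m ∉ Finset.Icc 1 n → w m = m

lemma mem_Inv {n : ℕ} {w : Equiv.Perm ℕ} {p : ℕ × ℕ} :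
    p ∈ Inv n w ↔ (p.1 ∈ Finset.Icc 1 n ∧ p.2 ∈ Finset.Icc 1 n) ∧ p.1 < p.2 ∧ w p.2 < w p.1 := by
  simp [Inv, Finset.mem_filter, Finset.mem_product]

lemma fixout_maps {n : ℕ} {w : Equiv.Perm ℕ} (h : FixOut n w) {m : ℕ}
    (hm : m ∈ Finset.Icc 1 n) : w m ∈ Finset.Icc 1 n := by
  by_contra hc
  have := h (w m) hc
  have := w.injective this
  rw [this] at hc
  exact hc hm

lemma fixout_symm {n : ℕ} {w : Equiv.Perm ℕ} (h : FixOut n w) : FixOut n w.symm := by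
  intro m hm
  have := h m hm
  conv_lhs => rw [← this]
  exact w.symm_apply_apply m

lemma fixout_mul {n : ℕ} {u v : Equiv.Perm ℕ} (hu : FixOut n u) (hv : FixOut n v) :
    FixOut n (u * v) := by
  intro m hm
  simp only [Equiv.Perm.mul_apply, hv m hm, hu m hm]

lemma fixout_one {n : ℕ} : FixOut n (1 : Equiv.Perm ℕ) := fun m _ => rfl

lemma fixout_swap {n i : ℕ} (h1 : 1 ≤ i) (h2 : i + 1 ≤ n) :
    FixOut n (Equiv.swap i (i + 1)) := by
  intro m hm
  simp only [Finset.mem_Icc, not_and, not_le] at hm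
  apply Equiv.swap_apply_of_ne_of_ne <;> omega

lemma wordProd_nil : wordProd [] = 1 := rfl

lemma wordProd_cons (i : ℕ) (l : List ℕ) :
    wordProd (i :: l) = Equiv.swap i (i + 1) * wordProd l := by
  simp [wordProd]

lemma fixout_wordProd {n : ℕ} : ∀ {l : List ℕ}, IsSnWord n l → FixOut n (wordProd l) := by
  intro l
  induction l with
  | nil => intro _; exact fixout_one
  | cons i l ih =>
      intro hl
      rw [wordProd_cons]
      have hi := hl i List.mem_cons_self
      exact fixout_mul (fixout_swap hi.1 hi.2) (ih fun j hj => hl j (List.mem_cons_of_mem i hj))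

lemma swap_lt_iff {i x y : ℕ} (h1 : ¬(x = i ∧ y = i + 1)) (h2 : ¬(x = i + 1 ∧ y = i)) :
    Equiv.swap i (i + 1) x < Equiv.swap i (i + 1) y ↔ x < y := by
  simp only [Equiv.swap_apply_def]
  split_ifs <;> omega

lemma inv_swap_mul {n i : ℕ} {w : Equiv.Perm ℕ} (hfix : FixOut n w)
    (hi1 : 1 ≤ i) (hi2 : i + 1 ≤ n) (hlt : w.symm i < w.symm (i + 1)) :
    Inv n (Equiv.swap i (i + 1) * w) = insert (w.symm i, w.symm (i + 1)) (Inv n w) := by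
  have hiI : i ∈ Finset.Icc 1 n := by simp only [Finset.mem_Icc]; omega
  have hi1I : i + 1 ∈ Finset.Icc 1 n := by simp only [Finset.mem_Icc]; omega
  ext ⟨a, b⟩
  simp only [mem_Inv, Finset.mem_insert, Prod.mk.injEq, Equiv.Perm.mul_apply]
  constructor
  · rintro ⟨⟨ha, hb⟩, hab, hvw⟩
    by_cases hc1 : w a = i ∧ w b = i + 1
    · left
      constructor
      · rw [← hc1.1, w.symm_apply_apply]
      · rw [← hc1.2, w.symm_apply_apply]
    · by_cases hc2 : w a = i + 1 ∧ w b = i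
      · exfalso
        have ha' : a = w.symm (i + 1) := by rw [← hc2.1, w.symm_apply_apply]
        have hb' : b = w.symm i := by rw [← hc2.2, w.symm_apply_apply]
        omega
      · right
        refine ⟨⟨ha, hb⟩, hab, ?_⟩
        have := (swap_lt_iff (i := i) (x := w b) (y := w a)
          (fun hc => hc2 ⟨hc.2, hc.1⟩) (fun hc => hc1 ⟨hc.2, hc.1⟩)).mp hvw
        exact this
  · rintro (⟨rfl, rfl⟩ | ⟨⟨ha, hb⟩, hab, hvw⟩)
    · refine ⟨⟨fixout_maps (fixout_symm hfix) hiI, fixout_maps (fixout_symm hfix) hi1I⟩, hlt, ?_⟩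
      rw [w.apply_symm_apply, w.apply_symm_apply, Equiv.swap_apply_left, Equiv.swap_apply_right]
      omega
    · refine ⟨⟨ha, hb⟩, hab, ?_⟩
      by_cases hc1 : w b = i ∧ w a = i + 1
      · exfalso
        have ha' : a = w.symm (i + 1) := by rw [← hc1.2, w.symm_apply_apply]
        have hb' : b = w.symm i := by rw [← hc1.1, w.symm_apply_apply]
        omega
      · by_cases hc2 : w b = i + 1 ∧ w a = i
        · omega
        · exact (swap_lt_iff (i := i) (x := w b) (y := w a) hc1 hc2).mpr hvw

lemma inv_swap_mul_of_gt {n i : ℕ} {w : Equiv.Perm ℕ} (hfix : FixOut n w)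
    (hi1 : 1 ≤ i) (hi2 : i + 1 ≤ n) (hgt : w.symm (i + 1) < w.symm i) :
    Inv n (Equiv.swap i (i + 1) * w) = (Inv n w).erase (w.symm (i + 1), w.symm i) ∧
      (w.symm (i + 1), w.symm i) ∈ Inv n w := by
  set s := Equiv.swap i (i + 1) with hs
  have hsfix : FixOut n s := fixout_swap hi1 hi2
  have h1 : FixOut n (s * w) := fixout_mul hsfix hfix
  have hsymm : ∀ x, (s * w).symm x = w.symm (s x) := by
    intro x
    rw [Equiv.symm_apply_eq]
    simp only [Equiv.Perm.mul_apply, Equiv.apply_symm_apply, hs, Equiv.swap_apply_self]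
  have h2 : (s * w).symm i < (s * w).symm (i + 1) := by
    rw [hsymm, hsymm, hs, Equiv.swap_apply_left, Equiv.swap_apply_right]
    exact hgt
  have key := inv_swap_mul h1 hi1 hi2 h2
  have hss : s * (s * w) = w := by
    rw [← mul_assoc, hs, Equiv.swap_mul_self, one_mul]
  rw [hss] at key
  have hp : ((s * w).symm i, (s * w).symm (i + 1)) = (w.symm (i + 1), w.symm i) := by
    rw [hsymm, hsymm, hs, Equiv.swap_apply_left, Equiv.swap_apply_right]
  rw [hp] at key
  have hnot : (w.symm (i + 1), w.symm i) ∉ Inv n (s * w) := by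
    rw [mem_Inv]
    rintro ⟨_, _, hv⟩
    simp only [Equiv.Perm.mul_apply, w.apply_symm_apply, hs, Equiv.swap_apply_left,
      Equiv.swap_apply_right] at hv
    omega
  constructor
  · rw [key, Finset.erase_insert hnot]
  · rw [key]; exact Finset.mem_insert_self _ _

lemma inv_card_succ_le {n i : ℕ} {w : Equiv.Perm ℕ} (hfix : FixOut n w)
    (hi1 : 1 ≤ i) (hi2 : i + 1 ≤ n) :
    (Inv n (Equiv.swap i (i + 1) * w)).card ≤ (Inv n w).card + 1 := by
  rcases lt_trichotomy (w.symm i) (w.symm (i + 1)) with h | h | h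
  · rw [inv_swap_mul hfix hi1 hi2 h]
    exact (Finset.card_insert_le _ _)
  · exfalso
    have := w.symm.injective h
    omega
  · rw [(inv_swap_mul_of_gt hfix hi1 hi2 h).1]
    calc ((Inv n w).erase _).card ≤ (Inv n w).card := Finset.card_erase_le
      _ ≤ (Inv n w).card + 1 := by omega

lemma invcard_le_length {n : ℕ} : ∀ l : List ℕ, IsSnWord n l →
    (Inv n (wordProd l)).card ≤ l.length := by
  intro l
  induction l with
  | nil =>
      intro _
      rw [wordProd_nil]
      have : Inv n (1 : Equiv.Perm ℕ) = ∅ := by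
        ext p
        rw [mem_Inv]
        simp only [Equiv.Perm.one_apply, Finset.notMem_empty, iff_false]
        rintro ⟨_, h1, h2⟩
        omega
      simp [this]
  | cons i l ih =>
      intro hl
      rw [wordProd_cons]
      have hi := hl i List.mem_cons_self
      have hl' : IsSnWord n l := fun j hj => hl j (List.mem_cons_of_mem i hj)
      calc (Inv n (Equiv.swap i (i + 1) * wordProd l)).card
          ≤ (Inv n (wordProd l)).card + 1 := inv_card_succ_le (fixout_wordProd hl') hi.1 hi.2
        _ ≤ l.length + 1 := by have := ih hl'; omega
        _ = (i :: l).length := by simp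

lemma step_aux {n : ℕ} {w : Equiv.Perm ℕ} (hfix : FixOut n w) (h : Inv n w = ∅) (m : ℕ)
    (hrest : ∀ m', m < m' → w m' = m') : w m = m := by
  by_cases hm : m ∈ Finset.Icc 1 n
  · have hwm_le : w m ≤ m := by
      by_contra hgt
      push_neg at hgt
      have h1 := hrest (w m) hgt
      have h2 := w.injective h1
      omega
    have hwb : w (w.symm m) = m := w.apply_symm_apply m
    have hble : w.symm m ≤ m := by
      by_contra hgt
      push_neg at hgt
      have := hrest (w.symm m) hgt
      omega
    rcases eq_or_lt_of_le hble with heq | hblt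
    · calc w m = w (w.symm m) := by rw [heq]
        _ = m := hwb
    · exfalso
      have hbI : w.symm m ∈ Finset.Icc 1 n := fixout_maps (fixout_symm hfix) hm
      have hne : w m ≠ m := by
        intro hc
        have : w.symm m = m := by rw [← hc, w.symm_apply_apply]; exact hc.symm
        omega
      have hmem : (w.symm m, m) ∈ Inv n w := by
        rw [mem_Inv]
        refine ⟨⟨hbI, hm⟩, hblt, ?_⟩
        show w m < w (w.symm m)
        rw [hwb]
        omega
      rw [h] at hmem
      exact absurd hmem (Finset.notMem_empty _)
  · exact hfix m hm

lemma eq_one_of_inv_empty {n : ℕ} {w : Equiv.Perm ℕ} (hfix : FixOut n w)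
    (h : Inv n w = ∅) : w = 1 := by
  have key : ∀ d m, n ≤ m + d → w m = m := by
    intro d
    induction d with
    | zero =>
        intro m hm
        refine step_aux hfix h m (fun m' hm' => hfix m' ?_)
        simp only [Finset.mem_Icc, not_and, not_le]
        omega
    | succ d ih =>
        intro m hm
        exact step_aux hfix h m (fun m' hm' => ih m' (by omega))
  ext m
  exact key n m (by omega)

lemma exists_descent {n : ℕ} {w : Equiv.Perm ℕ} (hfix : FixOut n w)
    (hne : (Inv n w).Nonempty) :
    ∃ i, 1 ≤ i ∧ i + 1 ≤ n ∧ w.symm (i + 1) < w.symm i := by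
  by_contra hno
  push_neg at hno
  have step : ∀ j, 1 ≤ j → j + 1 ≤ n → w.symm j < w.symm (j + 1) := by
    intro j h1 h2
    have hle := hno j h1 h2
    have hne' : w.symm j ≠ w.symm (j + 1) := by
      intro hc
      have := w.symm.injective hc
      omega
    omega
  have mono : ∀ i, 1 ≤ i → ∀ j, i < j → j ≤ n → w.symm i < w.symm j := by
    intro i hi j
    induction j with
    | zero => omega
    | succ j ih =>
        intro hij hj
        rcases Nat.lt_or_ge i j with hc | hc
        · exact (ih hc (by omega)).trans (step j (by omega) hj)
        · have : i = j := by omega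
          subst this
          exact step i hi hj
  obtain ⟨⟨a, b⟩, hab⟩ := hne
  rw [mem_Inv] at hab
  obtain ⟨⟨haI, hbI⟩, hlt, hw⟩ := hab
  have hwa : w a ∈ Finset.Icc 1 n := fixout_maps hfix haI
  have hwb : w b ∈ Finset.Icc 1 n := fixout_maps hfix hbI
  simp only [Finset.mem_Icc] at hwa hwb
  have := mono (w b) (by omega) (w a) hw (by omega)
  rw [w.symm_apply_apply, w.symm_apply_apply] at this
  omega

lemma exists_word (n : ℕ) : ∀ k (w : Equiv.Perm ℕ), FixOut n w → (Inv n w).card = k →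
    ∃ l : List ℕ, IsSnWord n l ∧ l.length = k ∧ wordProd l = w := by
  intro k
  induction k using Nat.strong_induction_on with
  | _ k ih =>
    intro w hfix hcard
    rcases Nat.eq_zero_or_pos k with rfl | hk
    · refine ⟨[], fun i hi => absurd hi List.not_mem_nil, rfl, ?_⟩
      rw [wordProd_nil]
      exact (eq_one_of_inv_empty hfix (Finset.card_eq_zero.mp hcard)).symm
    · have hne : (Inv n w).Nonempty := by
        rw [← Finset.card_pos, hcard]; exact hk
      obtain ⟨i, hi1, hi2, hgt⟩ := exists_descent hfix hne
      obtain ⟨hkey, hmem⟩ := inv_swap_mul_of_gt hfix hi1 hi2 hgt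
      have hfix' : FixOut n (Equiv.swap i (i + 1) * w) :=
        fixout_mul (fixout_swap hi1 hi2) hfix
      have hcard' : (Inv n (Equiv.swap i (i + 1) * w)).card = k - 1 := by
        rw [hkey, Finset.card_erase_of_mem hmem, hcard]
      obtain ⟨l, hl, hlen, hprod⟩ := ih (k - 1) (by omega) _ hfix' hcard'
      refine ⟨i :: l, ?_, by simp [hlen]; omega, ?_⟩
      · intro j hj
        rcases List.mem_cons.mp hj with rfl | hj'
        · exact ⟨hi1, hi2⟩
        · exact hl j hj'
      · rw [wordProd_cons, hprod, ← mul_assoc, Equiv.swap_mul_self, one_mul]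

lemma permLength_eq {n : ℕ} {w : Equiv.Perm ℕ} (hfix : FixOut n w) :
    permLength n w = (Inv n w).card := by
  obtain ⟨l, hl, hlen, hprod⟩ := exists_word n _ w hfix rfl
  unfold permLength
  apply le_antisymm
  · exact Nat.sInf_le ⟨l, hl, hlen, hprod⟩
  · refine le_csInf ⟨l.length, Set.mem_setOf.mpr ⟨l, hl, rfl, hprod⟩⟩ ?_
    rintro k ⟨l', hl', hlen', hprod'⟩
    calc (Inv n w).card = (Inv n (wordProd l')).card := by rw [hprod']
      _ ≤ l'.length := invcard_le_length l' hl'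
      _ = k := hlen'

end InvAux

/-- **Proposition (tableau inversions are permutation inversions).**
For `T ∈ SYT(λ/μ)` with word `w_T`, a pair `(i, j)` with `1 ≤ j < i ≤ n` is an inversion
of the tableau `T` if and only if it is an inversion of the permutation `w_T`, i.e.
`w_T⁻¹(i) < w_T⁻¹(j)`.  Consequently the number of inversions of `T` equals the Coxeter
length `ℓ(w_T)`. -/
theorem tableau_inversions_eq_word_inversions
    (sh : SkewShape) (T : (ℕ × ℕ) → ℕ) (hT : T ∈ sh.SYT)
    (w : Equiv.Perm ℕ) (hw : sh.IsWordOf T w) :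
    (∀ i j : ℕ, 1 ≤ j → j < i → i ≤ sh.nb →
        ((i, j) ∈ sh.invSet T ↔ w.symm i < w.symm j)) ∧
    (sh.invSet T).card = permLength sh.nb w := by
  obtain ⟨hfill, hstrict⟩ := hT
  have hfixw : InvAux.FixOut sh.nb w := hw.2
  have hsymmC : ∀ b ∈ sh.cells, w.symm (T b) = sh.colReading b := by
    intro b hb
    rw [← hw.1 b hb, Equiv.symm_apply_apply]
  have hB : ∀ i ∈ Finset.Icc 1 sh.nb, sh.boxOf T i ∈ sh.cells ∧ T (sh.boxOf T i) = i :=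
    fun i hi => InvAux.boxOf_spec hfill.1.2.2 hi
  have hiff : ∀ i j : ℕ, 1 ≤ j → j < i → i ≤ sh.nb →
      ((i, j) ∈ sh.invSet T ↔ w.symm i < w.symm j) := by
    intro i j hj hji hi
    have hiI : i ∈ Finset.Icc 1 sh.nb := by simp only [Finset.mem_Icc]; omega
    have hjI : j ∈ Finset.Icc 1 sh.nb := by simp only [Finset.mem_Icc]; omega
    obtain ⟨hBi, hTi⟩ := hB i hiI
    obtain ⟨hBj, hTj⟩ := hB j hjI
    have hws_i : w.symm i = sh.colReading (sh.boxOf T i) := by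
      have h := hsymmC _ hBi
      rwa [hTi] at h
    have hws_j : w.symm j = sh.colReading (sh.boxOf T j) := by
      have h := hsymmC _ hBj
      rwa [hTj] at h
    have hmem : (i, j) ∈ sh.invSet T ↔
        ((sh.boxOf T j).1 < (sh.boxOf T i).1 ∧ (sh.boxOf T i).2 < (sh.boxOf T j).2) := by
      simp only [SkewShape.invSet, Finset.mem_filter, Finset.mem_product]
      constructor
      · rintro ⟨_, _, h⟩; exact h
      · intro h; exact ⟨⟨hiI, hjI⟩, hji, h⟩
    rw [hmem, hws_i, hws_j, InvAux.colReading_lt_iff hBi hBj]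
    constructor
    · rintro ⟨h1, h2⟩
      exact Or.inl h2
    · rintro (h2 | ⟨heq, h1⟩)
      · refine ⟨?_, h2⟩
        by_contra hle
        push_neg at hle
        have := InvAux.lt_of_nw hstrict hBi hBj hle h2
        rw [hTi, hTj] at this
        omega
      · exfalso
        have := InvAux.lt_of_north hstrict hBi hBj h1 heq
        rw [hTi, hTj] at this
        omega
  refine ⟨hiff, ?_⟩
  have hcard : (sh.invSet T).card = (InvAux.Inv sh.nb w).card := by
    apply Finset.card_bij (fun a _ => (w.symm a.1, w.symm a.2))
    · rintro ⟨i, j⟩ ha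
      have ha' := ha
      simp only [SkewShape.invSet, Finset.mem_filter, Finset.mem_product, Finset.mem_Icc] at ha'
      obtain ⟨⟨⟨hi1, hi2⟩, hj1, hj2⟩, hji, _⟩ := ha'
      have hlt : w.symm i < w.symm j := (hiff i j hj1 hji hi2).mp ha
      rw [InvAux.mem_Inv]
      refine ⟨⟨InvAux.fixout_maps (InvAux.fixout_symm hfixw) (by simp only [Finset.mem_Icc]; omega),
        InvAux.fixout_maps (InvAux.fixout_symm hfixw) (by simp only [Finset.mem_Icc]; omega)⟩,
        hlt, ?_⟩
      simp only [w.apply_symm_apply]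
      omega
    · rintro ⟨i, j⟩ _ ⟨i', j'⟩ _ heq
      simp only [Prod.mk.injEq] at heq ⊢
      exact ⟨w.symm.injective heq.1, w.symm.injective heq.2⟩
    · rintro ⟨a, b⟩ hp
      rw [InvAux.mem_Inv] at hp
      obtain ⟨⟨haI, hbI⟩, hab, hvw⟩ := hp
      have hwa : w a ∈ Finset.Icc 1 sh.nb := InvAux.fixout_maps hfixw haI
      have hwb : w b ∈ Finset.Icc 1 sh.nb := InvAux.fixout_maps hfixw hbI
      simp only [Finset.mem_Icc] at hwa hwb
      have hsa : w.symm (w a) = a := w.symm_apply_apply a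
      have hsb : w.symm (w b) = b := w.symm_apply_apply b
      have hmem : (w a, w b) ∈ sh.invSet T := by
        rw [hiff (w a) (w b) (by omega) hvw (by omega), hsa, hsb]
        exact hab
      exact ⟨(w a, w b), hmem, by simp only [hsa, hsb]⟩
  rw [hcard, InvAux.permLength_eq hfixw]
end
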